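/- arXiv:1601.05989 — 5 statements merged into one kernel-verified Lean document; each statement's English description precedes it below -/
import Mathlib

section
/- Let segments ab and cd cross, and let ℓ be any line. Then the number of segments among {ac, bd} that ℓ intersects is at most the number of segments among {ab, cd} that ℓ intersects, where ac and bd form a non-crossing replacement pair for the crossing segments ab and cd. -/
private lemma comb_zero (s t X Y : ℝ) (hs : 0 ≤ s) (ht : 0 ≤ t) (hst : s + t = 1)
    (h : s * X + t * Y = 0) : X * Y ≤ 0 := by
  by_contra hpos
  push_neg at hpos
  rcases mul_pos_iff.mp hpos with ⟨hx, hy⟩ | ⟨hx, hy⟩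
  · have hsx : s * X = 0 :=
      le_antisymm (by nlinarith [mul_nonneg ht hy.le]) (mul_nonneg hs hx.le)
    have hs0 : s = 0 := by
      rcases mul_eq_zero.mp hsx with h' | h'
      · exact h'
      · exact absurd h' hx.ne'
    have ht1 : t = 1 := by linarith
    rw [hs0, ht1] at h
    nlinarith
  · have hsx : s * X = 0 :=
      le_antisymm (mul_nonpos_of_nonneg_of_nonpos hs hx.le)
        (by nlinarith [mul_nonpos_of_nonneg_of_nonpos ht hy.le])
    have hs0 : s = 0 := by
      rcases mul_eq_zero.mp hsx with h' | h'
      · exact h'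
      · exact absurd h' hx.ne
    have ht1 : t = 1 := by linarith
    rw [hs0, ht1] at h
    nlinarith

private lemma half_meet (u : ℝ × ℝ) (r : ℝ) (x y : ℝ × ℝ)
    (hX : u.1 * x.1 + u.2 * x.2 - r ≤ 0) (hY : 0 ≤ u.1 * y.1 + u.2 * y.2 - r) :
    (({p : ℝ × ℝ | u.1 * p.1 + u.2 * p.2 = r}) ∩ segment ℝ x y).Nonempty := by
  set X := u.1 * x.1 + u.2 * x.2 - r with hXdef
  set Y := u.1 * y.1 + u.2 * y.2 - r with hYdef
  by_cases hX0 : X = 0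
  · exact ⟨x, by simp only [Set.mem_setOf_eq]; linarith [hXdef ▸ hX0], left_mem_segment ℝ x y⟩
  · have hXlt : X < 0 := lt_of_le_of_ne hX hX0
    have hden : 0 < Y - X := by linarith
    set t : ℝ := -X / (Y - X) with htdef
    have ht0 : 0 < t := div_pos (by linarith) hden
    have ht1 : t ≤ 1 := by rw [div_le_one hden]; linarith
    refine ⟨(1 - t) • x + t • y, ?_, ⟨1 - t, t, by linarith, ht0.le, by ring, rfl⟩⟩
    have h1 : ((1 - t) • x + t • y).1 = (1 - t) * x.1 + t * y.1 := rfl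
    have h2 : ((1 - t) • x + t • y).2 = (1 - t) * x.2 + t * y.2 := rfl
    simp only [Set.mem_setOf_eq, h1, h2]
    have hkey : (1 - t) * X + t * Y = 0 := by
      rw [htdef]; field_simp; ring
    have hexp : (1 - t) * X + t * Y =
        u.1 * ((1 - t) * x.1 + t * y.1) + u.2 * ((1 - t) * x.2 + t * y.2) - r := by
      rw [hXdef, hYdef]; ring
    linarith [hexp ▸ hkey]

private lemma seg_meet_iff (u : ℝ × ℝ) (r : ℝ) (x y : ℝ × ℝ) :
    (({p : ℝ × ℝ | u.1 * p.1 + u.2 * p.2 = r}) ∩ segment ℝ x y).Nonempty ↔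
      (u.1 * x.1 + u.2 * x.2 - r) * (u.1 * y.1 + u.2 * y.2 - r) ≤ 0 := by
  constructor
  · rintro ⟨q, hq, hseg⟩
    simp only [segment, Set.mem_setOf_eq] at hseg
    obtain ⟨s, t, hs, ht, hst, rfl⟩ := hseg
    simp only [Set.mem_setOf_eq] at hq
    have h1 : (s • x + t • y).1 = s * x.1 + t * y.1 := rfl
    have h2 : (s • x + t • y).2 = s * x.2 + t * y.2 := rfl
    rw [h1, h2] at hq
    refine comb_zero s t _ _ hs ht hst ?_
    linear_combination hq - r * hst
  · intro h
    rcases mul_nonpos_iff.mp h with ⟨h1, h2⟩ | ⟨h1, h2⟩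
    · obtain ⟨q, hq, hseg⟩ := half_meet u r y x h2 h1
      exact ⟨q, hq, (segment_symm ℝ y x) ▸ hseg⟩
    · exact half_meet u r x y h1 h2

private lemma same_sign (s1 s2 X Y P : ℝ) (hs1 : 0 < s1) (hs2 : 0 < s2)
    (hP : P = s1 * X + s2 * Y) (hXY : 0 < X * Y) : 0 < X * P ∧ 0 < Y * P := by
  have hX2 : 0 < X * X := by
    rcases mul_pos_iff.mp hXY with ⟨hx, _⟩ | ⟨hx, _⟩
    · exact mul_pos hx hx
    · exact mul_pos_of_neg_of_neg hx hx
  have hY2 : 0 < Y * Y := by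
    rcases mul_pos_iff.mp hXY with ⟨_, hy⟩ | ⟨_, hy⟩
    · exact mul_pos hy hy
    · exact mul_pos_of_neg_of_neg hy hy
  constructor
  · have hid : X * P = s1 * (X * X) + s2 * (X * Y) := by rw [hP]; ring
    nlinarith [mul_pos hs1 hX2, mul_pos hs2 hXY]
  · have hid : Y * P = s1 * (X * Y) + s2 * (Y * Y) := by rw [hP]; ring
    nlinarith [mul_pos hs2 hY2, mul_pos hs1 hXY]

private lemma transfer (A C P : ℝ) (hCP : 0 < C * P) (hAC : A * C ≤ 0) : A * P ≤ 0 := by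
  by_contra h
  push_neg at h
  nlinarith [mul_pos h hCP, mul_nonneg (neg_nonneg.mpr hAC) (mul_self_nonneg P)]

open Classical in
/-- Let segments `ab` and `cd` cross (general position), and suppose `{ac, bd}`
is the non-crossing replacement pair.  Then for any line `ℓ`, the number of
segments among `{ac, bd}` meeting `ℓ` is at most the number of segments among
`{ab, cd}` meeting `ℓ`. -/
theorem flip_does_not_increase_line_crossings (a b c d : ℝ × ℝ)
    (h₁ : ¬ Collinear ℝ ({a, b, c} : Set (ℝ × ℝ)))
    (h₂ : ¬ Collinear ℝ ({a, b, d} : Set (ℝ × ℝ)))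
    (h₃ : ¬ Collinear ℝ ({a, c, d} : Set (ℝ × ℝ)))
    (h₄ : ¬ Collinear ℝ ({b, c, d} : Set (ℝ × ℝ)))
    (hcross : (openSegment ℝ a b ∩ openSegment ℝ c d).Nonempty)
    (hnoncross : Disjoint (openSegment ℝ a c) (openSegment ℝ b d))
    (u : ℝ × ℝ) (r : ℝ) (hu : u ≠ 0)
    (L : Set (ℝ × ℝ)) (hL : L = {p : ℝ × ℝ | u.1 * p.1 + u.2 * p.2 = r}) :
    ((if (L ∩ segment ℝ a c).Nonempty then 1 else 0) +
     (if (L ∩ segment ℝ b d).Nonempty then 1 else 0) : ℕ) ≤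
    ((if (L ∩ segment ℝ a b).Nonempty then 1 else 0) +
     (if (L ∩ segment ℝ c d).Nonempty then 1 else 0) : ℕ) := by
  subst hL
  obtain ⟨p, hpab, hpcd⟩ := hcross
  simp only [openSegment, Set.mem_setOf_eq] at hpab hpcd
  obtain ⟨s1, s2, hs1, hs2, hs, hpe⟩ := hpab
  obtain ⟨t1, t2, ht1, ht2, ht, hpe'⟩ := hpcd
  obtain ⟨A, hA⟩ : ∃ A : ℝ, A = u.1 * a.1 + u.2 * a.2 - r := ⟨_, rfl⟩
  obtain ⟨B, hB⟩ : ∃ B : ℝ, B = u.1 * b.1 + u.2 * b.2 - r := ⟨_, rfl⟩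
  obtain ⟨C, hC⟩ : ∃ C : ℝ, C = u.1 * c.1 + u.2 * c.2 - r := ⟨_, rfl⟩
  obtain ⟨D, hD⟩ : ∃ D : ℝ, D = u.1 * d.1 + u.2 * d.2 - r := ⟨_, rfl⟩
  obtain ⟨P, hP⟩ : ∃ P : ℝ, P = u.1 * p.1 + u.2 * p.2 - r := ⟨_, rfl⟩
  have he1 : p.1 = s1 * a.1 + s2 * b.1 := by rw [← hpe]; rfl
  have he2 : p.2 = s1 * a.2 + s2 * b.2 := by rw [← hpe]; rfl
  have hf1 : p.1 = t1 * c.1 + t2 * d.1 := by rw [← hpe']; rfl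
  have hf2 : p.2 = t1 * c.2 + t2 * d.2 := by rw [← hpe']; rfl
  have hPab : P = s1 * A + s2 * B := by
    rw [hP, hA, hB, he1, he2]; linear_combination r * hs
  have hPcd : P = t1 * C + t2 * D := by
    rw [hP, hC, hD, hf1, hf2]; linear_combination r * ht
  simp only [seg_meet_iff]
  rw [← hA, ← hB, ← hC, ← hD]
  clear h₁ h₂ h₃ h₄ hnoncross hu hpe hpe' he1 he2 hf1 hf2 hA hB hC hD hP
  by_cases hab : A * B ≤ 0 <;> by_cases hcd : C * D ≤ 0
  · rw [if_pos hab, if_pos hcd]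
    split_ifs <;> norm_num
  · push_neg at hcd
    obtain ⟨hCP, hDP⟩ := same_sign t1 t2 C D P ht1 ht2 hPcd hcd
    have key : ¬ (A * C ≤ 0 ∧ B * D ≤ 0) := by
      rintro ⟨hAC, hBD⟩
      have hAP := transfer A C P hCP hAC
      have hBP := transfer B D P hDP hBD
      have hid : P * P = s1 * (A * P) + s2 * (B * P) := by linear_combination P * hPab
      have hPP : P * P ≤ 0 := by
        nlinarith [mul_nonpos_of_nonneg_of_nonpos hs1.le hAP,
          mul_nonpos_of_nonneg_of_nonpos hs2.le hBP]
      nlinarith [mul_pos hCP hCP,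
        mul_nonpos_of_nonneg_of_nonpos (mul_self_nonneg C) hPP]
    rw [if_pos hab, if_neg (not_le.mpr hcd)]
    by_cases hac : A * C ≤ 0
    · have hbd : ¬ B * D ≤ 0 := fun h' => key ⟨hac, h'⟩
      rw [if_pos hac, if_neg hbd]
    · rw [if_neg hac]
      split_ifs <;> norm_num
  · push_neg at hab
    obtain ⟨hAP, hBP⟩ := same_sign s1 s2 A B P hs1 hs2 hPab hab
    have key : ¬ (A * C ≤ 0 ∧ B * D ≤ 0) := by
      rintro ⟨hAC, hBD⟩
      have hCP : C * P ≤ 0 := transfer C A P hAP (mul_comm A C ▸ hAC)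
      have hDP : D * P ≤ 0 := transfer D B P hBP (mul_comm B D ▸ hBD)
      have hid : P * P = t1 * (C * P) + t2 * (D * P) := by linear_combination P * hPcd
      have hPP : P * P ≤ 0 := by
        nlinarith [mul_nonpos_of_nonneg_of_nonpos ht1.le hCP,
          mul_nonpos_of_nonneg_of_nonpos ht2.le hDP]
      nlinarith [mul_pos hAP hAP,
        mul_nonpos_of_nonneg_of_nonpos (mul_self_nonneg A) hPP]
    rw [if_neg (not_le.mpr hab), if_pos hcd]
    by_cases hac : A * C ≤ 0
    · have hbd : ¬ B * D ≤ 0 := fun h' => key ⟨hac, h'⟩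
      rw [if_pos hac, if_neg hbd]
    · rw [if_neg hac]
      split_ifs <;> norm_num
  · push_neg at hab hcd
    obtain ⟨hAP, hBP⟩ := same_sign s1 s2 A B P hs1 hs2 hPab hab
    obtain ⟨hCP, hDP⟩ := same_sign t1 t2 C D P ht1 ht2 hPcd hcd
    have hac : ¬ A * C ≤ 0 := by
      intro h
      nlinarith [mul_pos hAP hCP, mul_nonneg (neg_nonneg.mpr h) (mul_self_nonneg P)]
    have hbd : ¬ B * D ≤ 0 := by
      intro h
      nlinarith [mul_pos hBP hDP, mul_nonneg (neg_nonneg.mpr h) (mul_self_nonneg P)]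
    rw [if_neg hac, if_neg hbd]
    norm_num
end

section
/- Any sequence of flips on a perfect straight-line matching of 2n points in general position terminates: there is no infinite sequence of matchings where each is obtained from the previous by a flip. -/
/-!
The total Euclidean length of a matching strictly decreases under a flip. If the segments
`p₁p₂` and `p₃p₄` cross at `x`, then `|p₁p₃| < |p₁x| + |xp₃|`, strictly because `p₁, p₂, p₃` are
not collinear, and `|p₂p₄| ≤ |p₂x| + |xp₄|`; summing, the new pair of segments is shorter than
the old one, whichever of the two other matchings of `{p₁, p₂, p₃, p₄}` is chosen. Since `P` carries
only finitely many matchings, no sequence of flips can go on forever.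
-/

/-- `m` encodes a perfect straight-line matching on the finite point set `P`:
it is a fixed-point-free involution of `P`, pairing each point with the other
endpoint of its segment. -/
def IsPerfectMatching (P : Finset (ℝ × ℝ)) (m : ℝ × ℝ → ℝ × ℝ) : Prop :=
  (∀ p ∈ P, m p ∈ P) ∧ (∀ p ∈ P, m (m p) = p) ∧ (∀ p ∈ P, m p ≠ p)

/-- `m'` is obtained from `m` by a flip: two segments `p₁p₂` and `p₃p₄` of `m`
whose relative interiors intersect are replaced by a different perfect matching
of `{p₁, p₂, p₃, p₄}`, all other segments being unchanged. -/
def IsFlip (P : Finset (ℝ × ℝ)) (m m' : ℝ × ℝ → ℝ × ℝ) : Prop :=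
  ∃ p₁ p₂ p₃ p₄, p₁ ∈ P ∧ p₂ ∈ P ∧ p₃ ∈ P ∧ p₄ ∈ P ∧
    m p₁ = p₂ ∧ m p₃ = p₄ ∧
    (openSegment ℝ p₁ p₂ ∩ openSegment ℝ p₃ p₄).Nonempty ∧
    (∀ q ∈ P, q ∉ ({p₁, p₂, p₃, p₄} : Set (ℝ × ℝ)) → m' q = m q) ∧
    m' p₁ ∈ ({p₁, p₂, p₃, p₄} : Set (ℝ × ℝ)) ∧
    m' p₃ ∈ ({p₁, p₂, p₃, p₄} : Set (ℝ × ℝ)) ∧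
    m' p₁ ≠ p₂

theorem Sbtw.collinear_of_wbtw {R V P : Type*} [Field R] [LinearOrder R] [IsStrictOrderedRing R]
    [AddCommGroup V] [Module R V] [AddTorsor V P] {a b c x : P}
    (hab : Sbtw R a x b) (hac : Wbtw R a x c) : Collinear R ({a, b, c} : Set P) := by
  have hb : b ∈ line[R, a, x] :=
    hab.wbtw.collinear.mem_affineSpan_of_mem_of_ne (by simp) (by simp) (by simp) hab.left_ne
  have hc : c ∈ line[R, a, x] :=
    hac.collinear.mem_affineSpan_of_mem_of_ne (by simp) (by simp) (by simp) hab.left_ne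
  exact collinear_triple_of_mem_affineSpan_pair (left_mem_affineSpan_pair R a x) hb hc

theorem dist_add_dist_lt_of_wbtw_of_not_wbtw {V P : Type*} [NormedAddCommGroup V]
    [NormedSpace ℝ V] [StrictConvexSpace ℝ V] [MetricSpace P] [NormedAddTorsor V P]
    {a b c d x : P} (hab : Wbtw ℝ a x b) (hcd : Wbtw ℝ c x d) (hac : ¬ Wbtw ℝ a x c) :
    dist a c + dist b d < dist a b + dist c d := by
  have hac' := dist_lt_dist_add_dist_iff.mpr hac
  have hbd := dist_triangle b x d
  rw [← dist_add_dist_eq_iff.mpr hab, ← dist_add_dist_eq_iff.mpr hcd]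
  linarith [dist_comm x c, dist_comm b x]

theorem sbtw_of_mem_openSegment {R V : Type*} [Field R] [LinearOrder R] [IsStrictOrderedRing R]
    [AddCommGroup V] [Module R V] {a b x : V} (hab : a ≠ b) (h : x ∈ openSegment R a b) :
    Sbtw R a x b :=
  ⟨mem_segment_iff_wbtw.mp (openSegment_subset_segment R a b h),
    fun hxa => hab (left_mem_openSegment_iff.mp (hxa ▸ h)),
    fun hxb => hab (right_mem_openSegment_iff.mp (hxb ▸ h))⟩

theorem Finset.sum_lt_sum_of_subset_of_eq_of_notMem {ι M : Type*} [AddCommMonoid M] [PartialOrder M]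
    [IsOrderedCancelAddMonoid M] {s t : Finset ι} {f g : ι → M} (hts : t ⊆ s)
    (hfg : ∀ i ∈ s, i ∉ t → f i = g i) (hlt : ∑ i ∈ t, f i < ∑ i ∈ t, g i) :
    ∑ i ∈ s, f i < ∑ i ∈ s, g i := by
  classical
  rw [← Finset.sum_sdiff hts, ← Finset.sum_sdiff (f := g) hts,
    Finset.sum_congr rfl fun i hi => hfg i (Finset.mem_sdiff.mp hi).1 (Finset.mem_sdiff.mp hi).2]
  exact (add_lt_add_iff_left _).mpr hlt

-- `ℝ × ℝ` carries the sup metric; the Euclidean distance is that of `WithLp 2 (ℝ × ℝ)`.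
open WithLp in
noncomputable def planeDist (p q : ℝ × ℝ) : ℝ := dist (toLp 2 p) (toLp 2 q)

theorem planeDist_comm (p q : ℝ × ℝ) : planeDist p q = planeDist q p := dist_comm _ _

theorem planeDist_add_lt_of_mem_openSegment {a b c d x : ℝ × ℝ}
    (hab : x ∈ openSegment ℝ a b) (hcd : x ∈ openSegment ℝ c d)
    (habc : ¬ Collinear ℝ ({a, b, c} : Set (ℝ × ℝ))) :
    planeDist a c + planeDist b d < planeDist a b + planeDist c d := by
  let e := (WithLp.linearEquiv 2 ℝ (ℝ × ℝ)).symm.toAffineEquiv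
  have hxab := sbtw_of_mem_openSegment (ne₁₂_of_not_collinear habc) hab
  have hxcd : Wbtw ℝ c x d := mem_segment_iff_wbtw.mp (openSegment_subset_segment ℝ c d hcd)
  refine dist_add_dist_lt_of_wbtw_of_not_wbtw (e.wbtw_map_iff.mpr hxab.wbtw)
    (e.wbtw_map_iff.mpr hxcd) fun hxac => habc ?_
  exact hxab.collinear_of_wbtw (e.wbtw_map_iff.mp hxac)

-- Every segment is counted from both of its endpoints: this is twice the total length.
noncomputable def matchingLength (P : Finset (ℝ × ℝ)) (m : ℝ × ℝ → ℝ × ℝ) : ℝ :=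
  ∑ p ∈ P, planeDist p (m p)

namespace IsPerfectMatching

variable {P : Finset (ℝ × ℝ)} {m : ℝ × ℝ → ℝ × ℝ} {p q : ℝ × ℝ}

theorem apply_eq_of_apply_eq (hm : IsPerfectMatching P m) (hp : p ∈ P) (h : m p = q) : m q = p := by
  rw [← h, hm.2.1 p hp]

theorem apply_mem_of_eq_of_notMem {m' : ℝ × ℝ → ℝ × ℝ} {S : Set (ℝ × ℝ)}
    (hm : IsPerfectMatching P m) (hm' : IsPerfectMatching P m')
    (hoff : ∀ q ∈ P, q ∉ S → m' q = m q) (hp : p ∈ P) (hmp : m p ∈ S) : m' p ∈ S := by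
  by_contra hout
  have h := hm.apply_eq_of_apply_eq (hm'.1 p hp)
    ((hoff _ (hm'.1 p hp) hout).symm.trans (hm'.2.1 p hp))
  exact hout (h ▸ hmp)

end IsPerfectMatching

section Flip

variable {P : Finset (ℝ × ℝ)} {m m' : ℝ × ℝ → ℝ × ℝ} {p₁ p₂ p₃ p₄ : ℝ × ℝ}

theorem matchingLength_lt_of_crossing_of_apply_eq
    (hgp : ∀ p ∈ P, ∀ q ∈ P, ∀ r ∈ P, p ≠ q → p ≠ r → q ≠ r →
      ¬ Collinear ℝ ({p, q, r} : Set (ℝ × ℝ)))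
    (hm : IsPerfectMatching P m) (hm' : IsPerfectMatching P m')
    (hp₁ : p₁ ∈ P) (hp₂ : p₂ ∈ P) (hp₃ : p₃ ∈ P) (hp₄ : p₄ ∈ P)
    (hm₁ : m p₁ = p₂) (hm₃ : m p₃ = p₄)
    (hcross : (openSegment ℝ p₁ p₂ ∩ openSegment ℝ p₃ p₄).Nonempty)
    (hoff : ∀ q ∈ P, q ∉ ({p₁, p₂, p₃, p₄} : Set (ℝ × ℝ)) → m' q = m q)
    (hm'₁ : m' p₁ = p₃) (h₂₃ : p₂ ≠ p₃) :
    matchingLength P m' < matchingLength P m := by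
  have hm₂ := hm.apply_eq_of_apply_eq hp₁ hm₁
  have hm₄ := hm.apply_eq_of_apply_eq hp₃ hm₃
  have hm'₃ := hm'.apply_eq_of_apply_eq hp₁ hm'₁
  have h₁₂ : p₁ ≠ p₂ := fun h => hm.2.2 p₁ hp₁ (hm₁.trans h.symm)
  have h₃₄ : p₃ ≠ p₄ := fun h => hm.2.2 p₃ hp₃ (hm₃.trans h.symm)
  have h₁₃ : p₁ ≠ p₃ := fun h => hm'.2.2 p₁ hp₁ (hm'₁.trans h.symm)
  have h₁₄ : p₁ ≠ p₄ := by rintro rfl; exact h₂₃ (hm₁.symm.trans hm₄)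
  have h₂₄ : p₂ ≠ p₄ := by rintro rfl; exact h₁₃ (hm₂.symm.trans hm₄)
  have hm'₂ : m' p₂ = p₄ := by
    rcases hm.apply_mem_of_eq_of_notMem hm' hoff hp₂ (by simp [hm₂]) with h | h | h | h
    · exact absurd (hm'₁.symm.trans (hm'.apply_eq_of_apply_eq hp₂ h)) h₂₃.symm
    · exact absurd h (hm'.2.2 p₂ hp₂)
    · exact absurd (hm'₃.symm.trans (hm'.apply_eq_of_apply_eq hp₂ h)) h₁₂
    · exact h
  have hm'₄ := hm'.apply_eq_of_apply_eq hp₂ hm'₂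
  obtain ⟨x, hx₁₂, hx₃₄⟩ := hcross
  have hkey := planeDist_add_lt_of_mem_openSegment hx₁₂ hx₃₄ (hgp p₁ hp₁ p₂ hp₂ p₃ hp₃ h₁₂ h₁₃ h₂₃)
  refine Finset.sum_lt_sum_of_subset_of_eq_of_notMem (t := {p₁, p₂, p₃, p₄}) ?_ ?_ ?_
  · simp [Finset.insert_subset_iff, hp₁, hp₂, hp₃, hp₄]
  · intro q hq hq'
    rw [hoff q hq (by simpa using hq')]
  · rw [Finset.sum_insert (by simp [h₁₂, h₁₃, h₁₄]), Finset.sum_insert (by simp [h₂₃, h₂₄]),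
      Finset.sum_pair h₃₄, Finset.sum_insert (by simp [h₁₂, h₁₃, h₁₄]),
      Finset.sum_insert (by simp [h₂₃, h₂₄]), Finset.sum_pair h₃₄]
    rw [hm₁, hm₂, hm₃, hm₄, hm'₁, hm'₂, hm'₃, hm'₄, planeDist_comm p₂ p₁, planeDist_comm p₃ p₁,
      planeDist_comm p₄ p₂, planeDist_comm p₄ p₃]
    linarith

theorem IsFlip.matchingLength_lt
    (hgp : ∀ p ∈ P, ∀ q ∈ P, ∀ r ∈ P, p ≠ q → p ≠ r → q ≠ r →
      ¬ Collinear ℝ ({p, q, r} : Set (ℝ × ℝ)))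
    (hm : IsPerfectMatching P m) (hm' : IsPerfectMatching P m') (hf : IsFlip P m m') :
    matchingLength P m' < matchingLength P m := by
  obtain ⟨p₁, p₂, p₃, p₄, hp₁, hp₂, hp₃, hp₄, hm₁, hm₃, hcross, hoff, hm'₁, -, hm'₁₂⟩ := hf
  rcases hm'₁ with h | h | h | h
  · exact absurd h (hm'.2.2 p₁ hp₁)
  · exact absurd h hm'₁₂
  · exact matchingLength_lt_of_crossing_of_apply_eq hgp hm hm' hp₁ hp₂ hp₃ hp₄ hm₁ hm₃ hcross
      hoff h (h ▸ hm'₁₂.symm)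
  · -- the case `m' p₁ = p₄` is the previous one with `p₃` and `p₄` exchanged
    refine matchingLength_lt_of_crossing_of_apply_eq hgp hm hm' hp₁ hp₂ hp₄ hp₃ hm₁
      (hm.apply_eq_of_apply_eq hp₃ hm₃) (by rwa [openSegment_symm ℝ p₄])
      (fun q hq hq' => hoff q hq ?_) h (h ▸ hm'₁₂.symm)
    simpa [or_comm, or_left_comm] using hq'

end Flip

theorem flip_sequences_terminate_general (P : Finset (ℝ × ℝ))
    (hgp : ∀ p ∈ P, ∀ q ∈ P, ∀ r ∈ P, p ≠ q → p ≠ r → q ≠ r →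
      ¬ Collinear ℝ ({p, q, r} : Set (ℝ × ℝ))) :
    ¬ ∃ f : ℕ → (ℝ × ℝ → ℝ × ℝ),
        (∀ i, IsPerfectMatching P (f i)) ∧ ∀ i, IsFlip P (f i) (f (i + 1)) := by
  rintro ⟨f, hpm, hflip⟩
  have hanti : StrictAnti fun i => matchingLength P (f i) :=
    strictAnti_nat_of_succ_lt fun i => (hflip i).matchingLength_lt hgp (hpm i) (hpm (i + 1))
  obtain ⟨i, j, hij, hfij⟩ := Finite.exists_ne_map_eq_of_infinite
    fun i (p : P) => (⟨f i p, (hpm i).1 p p.2⟩ : P)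
  refine hij (hanti.injective (Finset.sum_congr rfl fun p hp => ?_))
  rw [show f i p = f j p from congr_arg Subtype.val (congr_fun hfij ⟨p, hp⟩)]

/-- Any sequence of flips on a perfect straight-line matching of `2n` points in
general position terminates: there is no infinite sequence of perfect matchings
each obtained from the previous one by a flip. -/
theorem flip_sequences_terminate (n : ℕ) (P : Finset (ℝ × ℝ))
    (hcard : P.card = 2 * n)
    (hgp : ∀ p ∈ P, ∀ q ∈ P, ∀ r ∈ P, p ≠ q → p ≠ r → q ≠ r →
      ¬ Collinear ℝ ({p, q, r} : Set (ℝ × ℝ))) :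
    ¬ ∃ f : ℕ → (ℝ × ℝ → ℝ × ℝ),
        (∀ i, IsPerfectMatching P (f i)) ∧ ∀ i, IsFlip P (f i) (f (i + 1)) :=
  flip_sequences_terminate_general P hgp
end

section
/- Let p1, p2, p3, p4 be points in ℝ² sorted by strictly increasing x-coordinate, and suppose two crossing segments have endpoint set {p1,p2,p3,p4}. Then any vertical line x = c with x(p2) < c < x(p3) intersects both crossing segments, but intersects neither of the segments p1p2 and p3p4. -/
private lemma fst_segment' {a b z : ℝ × ℝ} (h : z ∈ segment ℝ a b) :
    z.1 ∈ segment ℝ a.1 b.1 := by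
  obtain ⟨u, v, hu, hv, huv, rfl⟩ := h
  exact ⟨u, v, hu, hv, huv, rfl⟩

private lemma exists_fst_eq' {a b : ℝ × ℝ} {c : ℝ}
    (h : c ∈ segment ℝ a.1 b.1) :
    ({p : ℝ × ℝ | p.1 = c} ∩ segment ℝ a b).Nonempty := by
  obtain ⟨u, v, hu, hv, huv, hc⟩ := h
  exact ⟨u • a + v • b, hc, ⟨u, v, hu, hv, huv, rfl⟩⟩

private lemma pick_right' (x1 x2 x3 x4 a b e : ℝ) (h12 : x1 < x2) (h23 : x2 < x3)
    (h34 : x3 < x4)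
    (ha : a = x1 ∨ a = x2 ∨ a = x3 ∨ a = x4)
    (hb : b = x1 ∨ b = x2 ∨ b = x3 ∨ b = x4)
    (he : e = x1 ∨ e = x2 ∨ e = x3 ∨ e = x4)
    (hab : a ≠ b) (hae : a ≠ e) (hbe : b ≠ e)
    (hal : a ≤ x2) (hbl : b ≤ x2) : x3 ≤ e := by
  rcases ha with rfl|rfl|rfl|rfl <;> rcases hb with rfl|rfl|rfl|rfl <;>
    rcases he with rfl|rfl|rfl|rfl <;> first | linarith | simp_all

private lemma pick_left' (x1 x2 x3 x4 a b e : ℝ) (h12 : x1 < x2) (h23 : x2 < x3)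
    (h34 : x3 < x4)
    (ha : a = x1 ∨ a = x2 ∨ a = x3 ∨ a = x4)
    (hb : b = x1 ∨ b = x2 ∨ b = x3 ∨ b = x4)
    (he : e = x1 ∨ e = x2 ∨ e = x3 ∨ e = x4)
    (hab : a ≠ b) (hae : a ≠ e) (hbe : b ≠ e)
    (har : x3 ≤ a) (hbr : x3 ≤ b) : e ≤ x2 := by
  rcases ha with rfl|rfl|rfl|rfl <;> rcases hb with rfl|rfl|rfl|rfl <;>
    rcases he with rfl|rfl|rfl|rfl <;> first | linarith | simp_all

private lemma mixed_core' (x1 x2 x3 x4 a b e f z : ℝ)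
    (h12 : x1 < x2) (h23 : x2 < x3) (h34 : x3 < x4)
    (ha : a = x1 ∨ a = x2 ∨ a = x3 ∨ a = x4)
    (hb : b = x1 ∨ b = x2 ∨ b = x3 ∨ b = x4)
    (he : e = x1 ∨ e = x2 ∨ e = x3 ∨ e = x4)
    (hf : f = x1 ∨ f = x2 ∨ f = x3 ∨ f = x4)
    (hab : a ≠ b) (hae : a ≠ e) (haf : a ≠ f) (hbe : b ≠ e) (hbf : b ≠ f)
    (hz1 : min a b ≤ z) (hz2 : z ≤ max a b)
    (hz3 : min e f ≤ z) (hz4 : z ≤ max e f) :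
    (a ≤ x2 ∧ x3 ≤ b) ∨ (b ≤ x2 ∧ x3 ≤ a) := by
  have sa : a ≤ x2 ∨ x3 ≤ a := by
    rcases ha with rfl|rfl|rfl|rfl
    · exact Or.inl h12.le
    · exact Or.inl le_rfl
    · exact Or.inr le_rfl
    · exact Or.inr h34.le
  have sb : b ≤ x2 ∨ x3 ≤ b := by
    rcases hb with rfl|rfl|rfl|rfl
    · exact Or.inl h12.le
    · exact Or.inl le_rfl
    · exact Or.inr le_rfl
    · exact Or.inr h34.le
  rcases sa with hal | har <;> rcases sb with hbl | hbr
  · -- both left: contradiction via crossing point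
    exfalso
    have hre : x3 ≤ e := pick_right' x1 x2 x3 x4 a b e h12 h23 h34 ha hb he hab hae hbe hal hbl
    have hrf : x3 ≤ f := pick_right' x1 x2 x3 x4 a b f h12 h23 h34 ha hb hf hab haf hbf hal hbl
    have h1 : max a b ≤ x2 := max_le hal hbl
    have h2 : x3 ≤ min e f := le_min hre hrf
    linarith
  · exact Or.inl ⟨hal, hbr⟩
  · exact Or.inr ⟨hbl, har⟩
  · exfalso
    have hle : e ≤ x2 := pick_left' x1 x2 x3 x4 a b e h12 h23 h34 ha hb he hab hae hbe har hbr
    have hlf : f ≤ x2 := pick_left' x1 x2 x3 x4 a b f h12 h23 h34 ha hb hf hab haf hbf har hbr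
    have h1 : x3 ≤ min a b := le_min har hbr
    have h2 : max e f ≤ x2 := max_le hle hlf
    linarith

/-- Let `p₁, p₂, p₃, p₄` be sorted by strictly increasing `x`-coordinate, and
suppose the segments `q₁q₂` and `q₃q₄` cross and have endpoint set
`{p₁,p₂,p₃,p₄}`.  Then any vertical line `x = c` with `x(p₂) < c < x(p₃)` meets
both crossing segments, but meets neither `p₁p₂` nor `p₃p₄`. -/
theorem vertical_line_crossing (p₁ p₂ p₃ p₄ q₁ q₂ q₃ q₄ : ℝ × ℝ)
    (hx₁ : p₁.1 < p₂.1) (hx₂ : p₂.1 < p₃.1) (hx₃ : p₃.1 < p₄.1)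
    (hset : ({q₁, q₂, q₃, q₄} : Set (ℝ × ℝ)) = {p₁, p₂, p₃, p₄})
    (hq : q₁ ≠ q₂ ∧ q₁ ≠ q₃ ∧ q₁ ≠ q₄ ∧ q₂ ≠ q₃ ∧ q₂ ≠ q₄ ∧ q₃ ≠ q₄)
    (hcross : (openSegment ℝ q₁ q₂ ∩ openSegment ℝ q₃ q₄).Nonempty)
    (c : ℝ) (hc₁ : p₂.1 < c) (hc₂ : c < p₃.1) :
    ({p : ℝ × ℝ | p.1 = c} ∩ segment ℝ q₁ q₂).Nonempty ∧
    ({p : ℝ × ℝ | p.1 = c} ∩ segment ℝ q₃ q₄).Nonempty ∧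
    {p : ℝ × ℝ | p.1 = c} ∩ segment ℝ p₁ p₂ = ∅ ∧
    {p : ℝ × ℝ | p.1 = c} ∩ segment ℝ p₃ p₄ = ∅ := by
  obtain ⟨h12, h13, h14, h23, h24, h34⟩ := hq
  obtain ⟨z, hz1, hz2⟩ := hcross
  -- membership of the q's in the p set
  have hmem : ∀ q, q ∈ ({q₁, q₂, q₃, q₄} : Set (ℝ × ℝ)) →
      q = p₁ ∨ q = p₂ ∨ q = p₃ ∨ q = p₄ := by
    intro q hqq
    rw [hset] at hqq
    simpa using hqq
  have hm₁ := hmem q₁ (by simp)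
  have hm₂ := hmem q₂ (by simp)
  have hm₃ := hmem q₃ (by simp)
  have hm₄ := hmem q₄ (by simp)
  -- coordinate memberships
  have cm : ∀ q : ℝ × ℝ, (q = p₁ ∨ q = p₂ ∨ q = p₃ ∨ q = p₄) →
      (q.1 = p₁.1 ∨ q.1 = p₂.1 ∨ q.1 = p₃.1 ∨ q.1 = p₄.1) := by
    rintro q (rfl|rfl|rfl|rfl) <;> simp
  have cm₁ := cm q₁ hm₁
  have cm₂ := cm q₂ hm₂
  have cm₃ := cm q₃ hm₃
  have cm₄ := cm q₄ hm₄
  -- coordinate distinctness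
  have cd : ∀ a b : ℝ × ℝ, (a = p₁ ∨ a = p₂ ∨ a = p₃ ∨ a = p₄) →
      (b = p₁ ∨ b = p₂ ∨ b = p₃ ∨ b = p₄) → a ≠ b → a.1 ≠ b.1 := by
    rintro a b (rfl|rfl|rfl|rfl) (rfl|rfl|rfl|rfl) hne <;>
      first
        | exact absurd rfl hne
        | exact ne_of_lt (by linarith)
        | exact ne_of_gt (by linarith)
  have cd12 := cd q₁ q₂ hm₁ hm₂ h12
  have cd13 := cd q₁ q₃ hm₁ hm₃ h13
  have cd14 := cd q₁ q₄ hm₁ hm₄ h14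
  have cd23 := cd q₂ q₃ hm₂ hm₃ h23
  have cd24 := cd q₂ q₄ hm₂ hm₄ h24
  have cd34 := cd q₃ q₄ hm₃ hm₄ h34
  -- bounds from the crossing point
  have hb12 : min q₁.1 q₂.1 ≤ z.1 ∧ z.1 ≤ max q₁.1 q₂.1 := by
    have h := fst_segment' (openSegment_subset_segment ℝ _ _ hz1)
    rw [segment_eq_uIcc, Set.uIcc, Set.mem_Icc] at h
    exact h
  have hb34 : min q₃.1 q₄.1 ≤ z.1 ∧ z.1 ≤ max q₃.1 q₄.1 := by
    have h := fst_segment' (openSegment_subset_segment ℝ _ _ hz2)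
    rw [segment_eq_uIcc, Set.uIcc, Set.mem_Icc] at h
    exact h
  have hmix12 : (q₁.1 ≤ p₂.1 ∧ p₃.1 ≤ q₂.1) ∨ (q₂.1 ≤ p₂.1 ∧ p₃.1 ≤ q₁.1) :=
    mixed_core' p₁.1 p₂.1 p₃.1 p₄.1 q₁.1 q₂.1 q₃.1 q₄.1 z.1 hx₁ hx₂ hx₃
      cm₁ cm₂ cm₃ cm₄ cd12 cd13 cd14 cd23 cd24
      hb12.1 hb12.2 hb34.1 hb34.2
  have hmix34 : (q₃.1 ≤ p₂.1 ∧ p₃.1 ≤ q₄.1) ∨ (q₄.1 ≤ p₂.1 ∧ p₃.1 ≤ q₃.1) :=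
    mixed_core' p₁.1 p₂.1 p₃.1 p₄.1 q₃.1 q₄.1 q₁.1 q₂.1 z.1 hx₁ hx₂ hx₃
      cm₃ cm₄ cm₁ cm₂ cd34 cd13.symm cd23.symm cd14.symm cd24.symm
      hb34.1 hb34.2 hb12.1 hb12.2
  have key : ∀ a b : ℝ × ℝ, (a.1 ≤ p₂.1 ∧ p₃.1 ≤ b.1) ∨ (b.1 ≤ p₂.1 ∧ p₃.1 ≤ a.1) →
      c ∈ segment ℝ a.1 b.1 := by
    rintro a b (⟨hl, hr⟩ | ⟨hl, hr⟩) <;>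
      rw [segment_eq_uIcc, Set.uIcc, Set.mem_Icc] <;> constructor
    · exact le_trans (min_le_left _ _) (by linarith)
    · exact le_trans (by linarith) (le_max_right _ _)
    · exact le_trans (min_le_right _ _) (by linarith)
    · exact le_trans (by linarith) (le_max_left _ _)
  refine ⟨exists_fst_eq' (key q₁ q₂ hmix12), exists_fst_eq' (key q₃ q₄ hmix34), ?_, ?_⟩
  · rw [Set.eq_empty_iff_forall_notMem]
    rintro p ⟨hpc, hps⟩
    have h := fst_segment' hps
    rw [segment_eq_uIcc, Set.uIcc, Set.mem_Icc] at h
    have : p.1 ≤ max p₁.1 p₂.1 := h.2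
    have hm : max p₁.1 p₂.1 ≤ p₂.1 := max_le hx₁.le le_rfl
    simp only [Set.mem_setOf_eq] at hpc
    linarith
  · rw [Set.eq_empty_iff_forall_notMem]
    rintro p ⟨hpc, hps⟩
    have h := fst_segment' hps
    rw [segment_eq_uIcc, Set.uIcc, Set.mem_Icc] at h
    have : min p₃.1 p₄.1 ≤ p.1 := h.1
    have hm : p₃.1 ≤ min p₃.1 p₄.1 := le_min le_rfl hx₃.le
    simp only [Set.mem_setOf_eq] at hpc
    linarith
end

section
/- Let 𝓚 be a set of n−1 vertical lines, one strictly between each pair of x-consecutive points of a 2n-point set P in general position with distinct x-coordinates. For any perfect matching M on P with a crossing, performing the flip that replaces the crossing pair on x-sorted endpoints p1,p2,p3,p4 by segments p1p2 and p3p4 strictly decreases Φ_𝓚(M) = Σ_{ℓ∈𝓚} #{segments of M meeting ℓ} by at least 2. -/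
/-- `M` is a perfect straight-line matching on the point set `P`: its elements
are (ordered representatives of) segments with endpoints in `P`, and every
point of `P` is an endpoint of exactly one segment. -/
def IsSegMatching (P : Finset (ℝ × ℝ)) (M : Finset ((ℝ × ℝ) × (ℝ × ℝ))) : Prop :=
  (∀ s ∈ M, s.1 ∈ P ∧ s.2 ∈ P ∧ s.1 ≠ s.2) ∧
  ∀ p ∈ P, ∃! s, s ∈ M ∧ (p = s.1 ∨ p = s.2)

open Classical in
/-- The potential `Φ_𝓚(M)`: the total number of (vertical line, segment)
incidences, where `K` is the set of `x`-coordinates of the vertical lines. -/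
noncomputable def Phi (K : Finset ℝ) (M : Finset ((ℝ × ℝ) × (ℝ × ℝ))) : ℕ :=
  ∑ c ∈ K, (M.filter fun s =>
    ({p : ℝ × ℝ | p.1 = c} ∩ segment ℝ s.1 s.2).Nonempty).card

open Classical in
/-- `M'` is obtained from `M` by the `x`-sorted flip: two crossing segments
with endpoint set `{p₁, p₂, p₃, p₄}` (sorted by strictly increasing
`x`-coordinate) are replaced by the segments `p₁p₂` and `p₃p₄`. -/
def IsXSortedFlip (M M' : Finset ((ℝ × ℝ) × (ℝ × ℝ))) : Prop :=
  ∃ p₁ p₂ p₃ p₄ : ℝ × ℝ, ∃ s t, s ∈ M ∧ t ∈ M ∧ s ≠ t ∧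
    p₁.1 < p₂.1 ∧ p₂.1 < p₃.1 ∧ p₃.1 < p₄.1 ∧
    ({s.1, s.2, t.1, t.2} : Set (ℝ × ℝ)) = {p₁, p₂, p₃, p₄} ∧
    (openSegment ℝ s.1 s.2 ∩ openSegment ℝ t.1 t.2).Nonempty ∧
    M' = (M \ {s, t}) ∪ {(p₁, p₂), (p₃, p₄)}

section Aux

private lemma fst_mem_uIcc {a b q : ℝ × ℝ} (h : q ∈ segment ℝ a b) :
    min a.1 b.1 ≤ q.1 ∧ q.1 ≤ max a.1 b.1 := by
  have h2 := Prod.segment_subset a b h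
  rw [Set.mem_prod] at h2
  have h3 := h2.1
  rw [segment_eq_uIcc, Set.uIcc, Set.mem_Icc] at h3
  exact ⟨h3.1, h3.2⟩

private lemma fst_mem_open {a b q : ℝ × ℝ} (hne : a.1 ≠ b.1) (h : q ∈ openSegment ℝ a b) :
    min a.1 b.1 < q.1 ∧ q.1 < max a.1 b.1 := by
  have h2 := Prod.openSegment_subset a b h
  rw [Set.mem_prod] at h2
  have h3 := h2.1
  rw [openSegment_eq_Ioo' hne, Set.mem_Ioo] at h3
  exact h3

private lemma exists_cross {a b : ℝ × ℝ} {c : ℝ} (h1 : a.1 < c) (h2 : c < b.1) :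
    ({p : ℝ × ℝ | p.1 = c} ∩ segment ℝ a b).Nonempty := by
  have hba : (0:ℝ) < b.1 - a.1 := by linarith
  set θ : ℝ := (c - a.1) / (b.1 - a.1) with hθ
  have hθ0 : 0 ≤ θ := div_nonneg (by linarith) (by linarith)
  have hθ1 : θ ≤ 1 := by rw [hθ, div_le_one hba]; linarith
  refine ⟨(1 - θ) • a + θ • b, ?_, ⟨1 - θ, θ, by linarith, hθ0, by ring, rfl⟩⟩
  show ((1 - θ) • a + θ • b).1 = c
  have : ((1 - θ) • a + θ • b).1 = (1 - θ) * a.1 + θ * b.1 := rfl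
  rw [this, hθ]
  field_simp
  ring

private lemma cross_iff (a b : ℝ × ℝ) (c : ℝ) (ha : a.1 ≠ c) (hb : b.1 ≠ c) :
    ({p : ℝ × ℝ | p.1 = c} ∩ segment ℝ a b).Nonempty ↔
      min a.1 b.1 < c ∧ c < max a.1 b.1 := by
  constructor
  · rintro ⟨q, hq1, hq2⟩
    rw [Set.mem_setOf_eq] at hq1
    have h := fst_mem_uIcc hq2
    rw [hq1] at h
    have hm : min a.1 b.1 ≠ c := by
      rcases min_cases a.1 b.1 with ⟨e, -⟩ | ⟨e, -⟩ <;> rw [e] <;> assumption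
    have hM : max a.1 b.1 ≠ c := by
      rcases max_cases a.1 b.1 with ⟨e, -⟩ | ⟨e, -⟩ <;> rw [e] <;> assumption
    exact ⟨h.1.lt_of_ne hm, h.2.lt_of_ne (Ne.symm hM)⟩
  · rintro ⟨h1, h2⟩
    rcases le_total a.1 b.1 with h | h
    · rw [min_eq_left h] at h1; rw [max_eq_right h] at h2
      exact exists_cross h1 h2
    · rw [min_eq_right h] at h1; rw [max_eq_left h] at h2
      rw [segment_symm]
      exact exists_cross h1 h2

private lemma config (x1 x2 x3 x4 a1 b1 a2 b2 : ℝ)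
    (h12 : x1 < x2) (h23 : x2 < x3) (h34 : x3 < x4)
    (hs : a1 < b1) (ht : a2 < b2)
    (hov1 : a2 < b1) (hov2 : a1 < b2)
    (ha1 : a1 = x1 ∨ a1 = x2 ∨ a1 = x3 ∨ a1 = x4)
    (hb1 : b1 = x1 ∨ b1 = x2 ∨ b1 = x3 ∨ b1 = x4)
    (ha2 : a2 = x1 ∨ a2 = x2 ∨ a2 = x3 ∨ a2 = x4)
    (hb2 : b2 = x1 ∨ b2 = x2 ∨ b2 = x3 ∨ b2 = x4)
    (h1 : x1 = a1 ∨ x1 = b1 ∨ x1 = a2 ∨ x1 = b2)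
    (h2 : x2 = a1 ∨ x2 = b1 ∨ x2 = a2 ∨ x2 = b2)
    (h3 : x3 = a1 ∨ x3 = b1 ∨ x3 = a2 ∨ x3 = b2)
    (h4 : x4 = a1 ∨ x4 = b1 ∨ x4 = a2 ∨ x4 = b2) :
    a1 ≤ x2 ∧ a2 ≤ x2 ∧ x3 ≤ b1 ∧ x3 ≤ b2 ∧ (a1 = x1 ∨ a2 = x1) ∧ (b1 = x4 ∨ b2 = x4) := by
  have key1 : a1 < x3 := by
    by_contra hcon; push_neg at hcon
    have hb1' : x3 < b1 := lt_of_le_of_lt hcon hs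
    have hb2' : x3 < b2 := lt_of_le_of_lt hcon hov2
    have e1 : x1 = a2 := by rcases h1 with e | e | e | e <;> linarith
    have e2 : x2 = a2 := by rcases h2 with e | e | e | e <;> linarith
    linarith
  have c1 : a1 ≤ x2 := by rcases ha1 with e | e | e | e <;> linarith
  have key2 : a2 < x3 := by
    by_contra hcon; push_neg at hcon
    have hb2' : x3 < b2 := lt_of_le_of_lt hcon ht
    have hb1' : x3 < b1 := lt_of_le_of_lt hcon hov1
    have e1 : x1 = a1 := by rcases h1 with e | e | e | e <;> linarith
    have e2 : x2 = a1 := by rcases h2 with e | e | e | e <;> linarith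
    linarith
  have c2 : a2 ≤ x2 := by rcases ha2 with e | e | e | e <;> linarith
  have c3 : x3 ≤ b1 := by
    by_contra hcon; push_neg at hcon
    have hb1'' : b1 ≤ x2 := by rcases hb1 with e | e | e | e <;> linarith
    have e4 : x4 = b2 := by rcases h4 with e | e | e | e <;> linarith
    have e3 : x3 = b2 := by rcases h3 with e | e | e | e <;> linarith
    linarith
  have c4 : x3 ≤ b2 := by
    by_contra hcon; push_neg at hcon
    have hb2'' : b2 ≤ x2 := by rcases hb2 with e | e | e | e <;> linarith
    have e4 : x4 = b1 := by rcases h4 with e | e | e | e <;> linarith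
    have e3 : x3 = b1 := by rcases h3 with e | e | e | e <;> linarith
    linarith
  refine ⟨c1, c2, c3, c4, ?_, ?_⟩
  · rcases h1 with e | e | e | e
    · exact Or.inl e.symm
    · exfalso; linarith
    · exact Or.inr e.symm
    · exfalso; linarith
  · rcases h4 with e | e | e | e
    · exfalso; linarith
    · exact Or.inl e.symm
    · exfalso; linarith
    · exact Or.inr e.symm

private lemma ind_le (x1 x2 x3 x4 a1 b1 a2 b2 c : ℝ)
    (h23 : x2 < x3)
    (c1 : a1 ≤ x2) (c2 : a2 ≤ x2) (c3 : x3 ≤ b1) (c4 : x3 ≤ b2)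
    (c5 : a1 = x1 ∨ a2 = x1) (c6 : b1 = x4 ∨ b2 = x4)
    (hc2 : c ≠ x2) (hc3 : c ≠ x3)
    (P Q R S : Prop) [Decidable P] [Decidable Q] [Decidable R] [Decidable S]
    (hP : P ↔ x1 < c ∧ c < x2) (hQ : Q ↔ x3 < c ∧ c < x4)
    (hR : R ↔ a1 < c ∧ c < b1) (hS : S ↔ a2 < c ∧ c < b2) :
    (if P then 1 else 0) + (if Q then 1 else 0) ≤
      (if R then 1 else 0) + (if S then 1 else 0) := by
  rcases lt_trichotomy c x2 with h | h | h
  · have hQ' : ¬ Q := by rw [hQ]; rintro ⟨h1, -⟩; linarith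
    rw [if_neg hQ', add_zero]
    by_cases hP' : P
    · rw [if_pos hP']
      rw [hP] at hP'
      rcases c5 with e | e
      · rw [if_pos (hR.mpr ⟨by linarith [hP'.1], by linarith [hP'.2]⟩)]
        exact Nat.le_add_right 1 _
      · rw [if_pos (hS.mpr ⟨by linarith [hP'.1], by linarith [hP'.2]⟩)]
        exact Nat.le_add_left 1 _
    · rw [if_neg hP']; exact Nat.zero_le _
  · exact absurd h hc2
  · rcases lt_trichotomy c x3 with h' | h' | h'
    · rw [if_pos (hR.mpr ⟨by linarith, by linarith⟩), if_pos (hS.mpr ⟨by linarith, by linarith⟩)]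
      have e1 : (if P then 1 else 0) ≤ 1 := by split <;> simp
      have e2 : (if Q then 1 else 0) ≤ 1 := by split <;> simp
      omega
    · exact absurd h' hc3
    · have hP' : ¬ P := by rw [hP]; rintro ⟨-, h2⟩; linarith
      rw [if_neg hP', zero_add]
      by_cases hQ' : Q
      · rw [if_pos hQ']
        rw [hQ] at hQ'
        rcases c6 with e | e
        · rw [if_pos (hR.mpr ⟨by linarith [hQ'.1], by linarith [hQ'.2]⟩)]
          exact Nat.le_add_right 1 _
        · rw [if_pos (hS.mpr ⟨by linarith [hQ'.1], by linarith [hQ'.2]⟩)]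
          exact Nat.le_add_left 1 _
      · rw [if_neg hQ']; exact Nat.zero_le _

open Classical in
private noncomputable def cnt (c : ℝ) (X : Finset ((ℝ × ℝ) × (ℝ × ℝ))) : ℕ :=
  (X.filter fun s => ({p : ℝ × ℝ | p.1 = c} ∩ segment ℝ s.1 s.2).Nonempty).card

private lemma Phi_eq_sum_cnt (K : Finset ℝ) (M : Finset ((ℝ × ℝ) × (ℝ × ℝ))) :
    Phi K M = ∑ c ∈ K, cnt c M := rfl

open Classical in
private lemma cnt_insert (c : ℝ) (a : (ℝ × ℝ) × (ℝ × ℝ)) (X : Finset ((ℝ × ℝ) × (ℝ × ℝ)))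
    (ha : a ∉ X) :
    cnt c (insert a X) =
      (if ({p : ℝ × ℝ | p.1 = c} ∩ segment ℝ a.1 a.2).Nonempty then 1 else 0) + cnt c X := by
  unfold cnt
  rw [Finset.filter_insert]
  split_ifs with h
  · rw [Finset.card_insert_of_notMem (by simp [Finset.mem_filter, ha]), add_comm]
  · simp

private lemma eq_min_or_max (u v : ℝ) : u = min u v ∨ u = max u v := by
  rcases le_total u v with h | h
  · exact Or.inl (min_eq_left h).symm
  · exact Or.inr (max_eq_left h).symm

private lemma eq_min_or_max' (u v : ℝ) : v = min u v ∨ v = max u v := by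
  rcases le_total v u with h | h
  · exact Or.inl (min_eq_right h).symm
  · exact Or.inr (max_eq_right h).symm

end Aux

/-- Let `𝓚` (given by its set `K` of `x`-coordinates) consist of `n - 1`
vertical lines, one strictly between each pair of `x`-consecutive points of a
`2n`-point set `P` in general position with distinct `x`-coordinates, and none
through a point of `P`.  Then an `x`-sorted flip decreases the potential
`Φ_𝓚` by at least `2`. -/
theorem xsorted_flip_decreases_potential (n : ℕ) (P : Finset (ℝ × ℝ))
    (hcard : P.card = 2 * n)
    (hinj : Set.InjOn Prod.fst (↑P : Set (ℝ × ℝ)))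
    (hgp : ∀ p ∈ P, ∀ q ∈ P, ∀ r ∈ P, p ≠ q → p ≠ r → q ≠ r →
      ¬ Collinear ℝ ({p, q, r} : Set (ℝ × ℝ)))
    (K : Finset ℝ) (hKcard : K.card = n - 1)
    (hKavoid : ∀ c ∈ K, ∀ p ∈ P, p.1 ≠ c)
    (hKsep : ∀ p ∈ P, ∀ q ∈ P, p.1 < q.1 →
      (∀ r ∈ P, ¬ (p.1 < r.1 ∧ r.1 < q.1)) → ∃ c ∈ K, p.1 < c ∧ c < q.1)
    (M M' : Finset ((ℝ × ℝ) × (ℝ × ℝ)))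
    (hM : IsSegMatching P M) (hflip : IsXSortedFlip M M') :
    Phi K M' + 2 ≤ Phi K M := by
  classical
  obtain ⟨p₁, p₂, p₃, p₄, s, t, hs, ht, hst, h12, h23, h34, hset, hcross, hM'⟩ := hflip
  obtain ⟨hMseg, hMuniq⟩ := hM
  have hmem : ∀ q : ℝ × ℝ, (q = s.1 ∨ q = s.2 ∨ q = t.1 ∨ q = t.2) ↔
      (q = p₁ ∨ q = p₂ ∨ q = p₃ ∨ q = p₄) := by
    intro q
    have := Set.ext_iff.mp hset q
    simpa using this
  have hs1 : s.1 = p₁ ∨ s.1 = p₂ ∨ s.1 = p₃ ∨ s.1 = p₄ := (hmem s.1).1 (Or.inl rfl)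
  have hs2 : s.2 = p₁ ∨ s.2 = p₂ ∨ s.2 = p₃ ∨ s.2 = p₄ := (hmem s.2).1 (Or.inr (Or.inl rfl))
  have ht1 : t.1 = p₁ ∨ t.1 = p₂ ∨ t.1 = p₃ ∨ t.1 = p₄ :=
    (hmem t.1).1 (Or.inr (Or.inr (Or.inl rfl)))
  have ht2 : t.2 = p₁ ∨ t.2 = p₂ ∨ t.2 = p₃ ∨ t.2 = p₄ :=
    (hmem t.2).1 (Or.inr (Or.inr (Or.inr rfl)))
  have hp1 : p₁ = s.1 ∨ p₁ = s.2 ∨ p₁ = t.1 ∨ p₁ = t.2 := (hmem p₁).2 (Or.inl rfl)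
  have hp2 : p₂ = s.1 ∨ p₂ = s.2 ∨ p₂ = t.1 ∨ p₂ = t.2 := (hmem p₂).2 (Or.inr (Or.inl rfl))
  have hp3 : p₃ = s.1 ∨ p₃ = s.2 ∨ p₃ = t.1 ∨ p₃ = t.2 :=
    (hmem p₃).2 (Or.inr (Or.inr (Or.inl rfl)))
  have hp4 : p₄ = s.1 ∨ p₄ = s.2 ∨ p₄ = t.1 ∨ p₄ = t.2 :=
    (hmem p₄).2 (Or.inr (Or.inr (Or.inr rfl)))
  have hsP := hMseg s hs
  have htP := hMseg t ht
  have hp1P : p₁ ∈ P := by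
    rcases hp1 with e | e | e | e <;> rw [e]
    exacts [hsP.1, hsP.2.1, htP.1, htP.2.1]
  have hp2P : p₂ ∈ P := by
    rcases hp2 with e | e | e | e <;> rw [e]
    exacts [hsP.1, hsP.2.1, htP.1, htP.2.1]
  have hp3P : p₃ ∈ P := by
    rcases hp3 with e | e | e | e <;> rw [e]
    exacts [hsP.1, hsP.2.1, htP.1, htP.2.1]
  have hp4P : p₄ ∈ P := by
    rcases hp4 with e | e | e | e <;> rw [e]
    exacts [hsP.1, hsP.2.1, htP.1, htP.2.1]
  have hsne : s.1.1 ≠ s.2.1 := fun h => hsP.2.2 (hinj hsP.1 hsP.2.1 h)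
  have htne : t.1.1 ≠ t.2.1 := fun h => htP.2.2 (hinj htP.1 htP.2.1 h)
  set a1 := min s.1.1 s.2.1 with ha1def
  set b1 := max s.1.1 s.2.1 with hb1def
  set a2 := min t.1.1 t.2.1 with ha2def
  set b2 := max t.1.1 t.2.1 with hb2def
  have hsab : a1 < b1 := min_lt_max.mpr hsne
  have htab : a2 < b2 := min_lt_max.mpr htne
  obtain ⟨q, hqs, hqt⟩ := hcross
  have hq1 := fst_mem_open hsne hqs
  have hq2 := fst_mem_open htne hqt
  rw [← ha1def, ← hb1def] at hq1
  rw [← ha2def, ← hb2def] at hq2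
  have hxcases : ∀ y : ℝ × ℝ, (y = p₁ ∨ y = p₂ ∨ y = p₃ ∨ y = p₄) →
      (y.1 = p₁.1 ∨ y.1 = p₂.1 ∨ y.1 = p₃.1 ∨ y.1 = p₄.1) := by
    rintro y (e | e | e | e)
    · exact Or.inl (by rw [e])
    · exact Or.inr (Or.inl (by rw [e]))
    · exact Or.inr (Or.inr (Or.inl (by rw [e])))
    · exact Or.inr (Or.inr (Or.inr (by rw [e])))
  have hs1x := hxcases s.1 hs1
  have hs2x := hxcases s.2 hs2
  have ht1x := hxcases t.1 ht1
  have ht2x := hxcases t.2 ht2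
  have ha1m : a1 = p₁.1 ∨ a1 = p₂.1 ∨ a1 = p₃.1 ∨ a1 = p₄.1 := by
    rcases min_cases s.1.1 s.2.1 with ⟨e, -⟩ | ⟨e, -⟩ <;> rw [ha1def, e]
    exacts [hs1x, hs2x]
  have hb1m : b1 = p₁.1 ∨ b1 = p₂.1 ∨ b1 = p₃.1 ∨ b1 = p₄.1 := by
    rcases max_cases s.1.1 s.2.1 with ⟨e, -⟩ | ⟨e, -⟩ <;> rw [hb1def, e]
    exacts [hs1x, hs2x]
  have ha2m : a2 = p₁.1 ∨ a2 = p₂.1 ∨ a2 = p₃.1 ∨ a2 = p₄.1 := by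
    rcases min_cases t.1.1 t.2.1 with ⟨e, -⟩ | ⟨e, -⟩ <;> rw [ha2def, e]
    exacts [ht1x, ht2x]
  have hb2m : b2 = p₁.1 ∨ b2 = p₂.1 ∨ b2 = p₃.1 ∨ b2 = p₄.1 := by
    rcases max_cases t.1.1 t.2.1 with ⟨e, -⟩ | ⟨e, -⟩ <;> rw [hb2def, e]
    exacts [ht1x, ht2x]
  have hall : ∀ y : ℝ × ℝ, (y = s.1 ∨ y = s.2 ∨ y = t.1 ∨ y = t.2) →
      (y.1 = a1 ∨ y.1 = b1 ∨ y.1 = a2 ∨ y.1 = b2) := by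
    have e1 := eq_min_or_max s.1.1 s.2.1
    have e2 := eq_min_or_max' s.1.1 s.2.1
    have e3 := eq_min_or_max t.1.1 t.2.1
    have e4 := eq_min_or_max' t.1.1 t.2.1
    rw [← ha1def, ← hb1def] at e1 e2
    rw [← ha2def, ← hb2def] at e3 e4
    rintro y (e | e | e | e)
    · rw [e]; rcases e1 with f | f
      · exact Or.inl f
      · exact Or.inr (Or.inl f)
    · rw [e]; rcases e2 with f | f
      · exact Or.inl f
      · exact Or.inr (Or.inl f)
    · rw [e]; rcases e3 with f | f
      · exact Or.inr (Or.inr (Or.inl f))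
      · exact Or.inr (Or.inr (Or.inr f))
    · rw [e]; rcases e4 with f | f
      · exact Or.inr (Or.inr (Or.inl f))
      · exact Or.inr (Or.inr (Or.inr f))
  have h1m : p₁.1 = a1 ∨ p₁.1 = b1 ∨ p₁.1 = a2 ∨ p₁.1 = b2 := hall p₁ hp1
  have h2m : p₂.1 = a1 ∨ p₂.1 = b1 ∨ p₂.1 = a2 ∨ p₂.1 = b2 := hall p₂ hp2
  have h3m : p₃.1 = a1 ∨ p₃.1 = b1 ∨ p₃.1 = a2 ∨ p₃.1 = b2 := hall p₃ hp3
  have h4m : p₄.1 = a1 ∨ p₄.1 = b1 ∨ p₄.1 = a2 ∨ p₄.1 = b2 := hall p₄ hp4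
  obtain ⟨c1, c2, c3, c4, c5, c6⟩ :=
    config p₁.1 p₂.1 p₃.1 p₄.1 a1 b1 a2 b2 h12 h23 h34 hsab htab
      (by linarith [hq1.2, hq2.1]) (by linarith [hq1.1, hq2.2])
      ha1m hb1m ha2m hb2m h1m h2m h3m h4m
  -- the two new segments are not in M
  have huniq1 : ∀ (p : ℝ × ℝ), p ∈ P → ∀ w₁ w₂ : (ℝ × ℝ) × (ℝ × ℝ), w₁ ∈ M → w₂ ∈ M →
      (p = w₁.1 ∨ p = w₁.2) → (p = w₂.1 ∨ p = w₂.2) → w₁ = w₂ := by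
    intro p hp w₁ w₂ hw1 hw2 e1 e2
    obtain ⟨w, hw, huniq⟩ := hMuniq p hp
    rw [huniq w₁ ⟨hw1, e1⟩, huniq w₂ ⟨hw2, e2⟩]
  have huM : ((p₁, p₂) : (ℝ × ℝ) × (ℝ × ℝ)) ∉ M := by
    intro hu
    rcases hp1 with e | e | e | e
    · have hus : ((p₁, p₂) : (ℝ × ℝ) × (ℝ × ℝ)) = s :=
        huniq1 p₁ hp1P _ s hu hs (Or.inl rfl) (Or.inl e)
      have hb : b1 = max p₁.1 p₂.1 := by rw [hb1def, ← hus]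
      rw [max_eq_right h12.le] at hb
      linarith
    · have hus : ((p₁, p₂) : (ℝ × ℝ) × (ℝ × ℝ)) = s :=
        huniq1 p₁ hp1P _ s hu hs (Or.inl rfl) (Or.inr e)
      have hb : b1 = max p₁.1 p₂.1 := by rw [hb1def, ← hus]
      rw [max_eq_right h12.le] at hb
      linarith
    · have hut : ((p₁, p₂) : (ℝ × ℝ) × (ℝ × ℝ)) = t :=
        huniq1 p₁ hp1P _ t hu ht (Or.inl rfl) (Or.inl e)
      have hb : b2 = max p₁.1 p₂.1 := by rw [hb2def, ← hut]
      rw [max_eq_right h12.le] at hb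
      linarith
    · have hut : ((p₁, p₂) : (ℝ × ℝ) × (ℝ × ℝ)) = t :=
        huniq1 p₁ hp1P _ t hu ht (Or.inl rfl) (Or.inr e)
      have hb : b2 = max p₁.1 p₂.1 := by rw [hb2def, ← hut]
      rw [max_eq_right h12.le] at hb
      linarith
  have hvM : ((p₃, p₄) : (ℝ × ℝ) × (ℝ × ℝ)) ∉ M := by
    intro hv
    rcases hp3 with e | e | e | e
    · have hvs : ((p₃, p₄) : (ℝ × ℝ) × (ℝ × ℝ)) = s :=
        huniq1 p₃ hp3P _ s hv hs (Or.inl rfl) (Or.inl e)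
      have hb : a1 = min p₃.1 p₄.1 := by rw [ha1def, ← hvs]
      rw [min_eq_left h34.le] at hb
      linarith
    · have hvs : ((p₃, p₄) : (ℝ × ℝ) × (ℝ × ℝ)) = s :=
        huniq1 p₃ hp3P _ s hv hs (Or.inl rfl) (Or.inr e)
      have hb : a1 = min p₃.1 p₄.1 := by rw [ha1def, ← hvs]
      rw [min_eq_left h34.le] at hb
      linarith
    · have hvt : ((p₃, p₄) : (ℝ × ℝ) × (ℝ × ℝ)) = t :=
        huniq1 p₃ hp3P _ t hv ht (Or.inl rfl) (Or.inl e)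
      have hb : a2 = min p₃.1 p₄.1 := by rw [ha2def, ← hvt]
      rw [min_eq_left h34.le] at hb
      linarith
    · have hvt : ((p₃, p₄) : (ℝ × ℝ) × (ℝ × ℝ)) = t :=
        huniq1 p₃ hp3P _ t hv ht (Or.inl rfl) (Or.inr e)
      have hb : a2 = min p₃.1 p₄.1 := by rw [ha2def, ← hvt]
      rw [min_eq_left h34.le] at hb
      linarith
  have huv : ((p₁, p₂) : (ℝ × ℝ) × (ℝ × ℝ)) ≠ (p₃, p₄) := by
    intro e
    have e1 : p₁ = p₃ := congrArg Prod.fst e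
    have : p₁.1 = p₃.1 := by rw [e1]
    linarith
  set A := M \ {s, t} with hA
  have hsA : s ∉ A := by simp [hA]
  have htA : t ∉ A := by simp [hA]
  have hMeq : M = insert s (insert t A) := by
    ext x
    simp only [Finset.mem_insert, hA, Finset.mem_sdiff, Finset.mem_singleton]
    constructor
    · intro hx
      by_cases e1 : x = s
      · exact Or.inl e1
      by_cases e2 : x = t
      · exact Or.inr (Or.inl e2)
      exact Or.inr (Or.inr ⟨hx, fun h => h.elim e1 e2⟩)
    · rintro (rfl | rfl | ⟨hx, -⟩) <;> assumption
  have hAM : A ⊆ M := Finset.sdiff_subset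
  have huA : ((p₁, p₂) : (ℝ × ℝ) × (ℝ × ℝ)) ∉ A := fun h => huM (hAM h)
  have hvA : ((p₃, p₄) : (ℝ × ℝ) × (ℝ × ℝ)) ∉ A := fun h => hvM (hAM h)
  have hM'eq : M' = insert (p₁, p₂) (insert (p₃, p₄) A) := by
    rw [hM']
    ext x
    simp only [Finset.mem_union, Finset.mem_insert, Finset.mem_singleton]
    constructor
    · rintro (h | h | h)
      · exact Or.inr (Or.inr h)
      · exact Or.inl h
      · exact Or.inr (Or.inl h)
    · rintro (h | h | h)
      · exact Or.inr (Or.inl h)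
      · exact Or.inr (Or.inr h)
      · exact Or.inl h
  have hsIns : s ∉ insert t A := by simp [hsA, hst]
  have huIns : ((p₁, p₂) : (ℝ × ℝ) × (ℝ × ℝ)) ∉ insert (p₃, p₄) A := by simp [huA, huv]
  have hcntM : ∀ c : ℝ, cnt c M =
      (if ({p : ℝ × ℝ | p.1 = c} ∩ segment ℝ s.1 s.2).Nonempty then 1 else 0) +
      ((if ({p : ℝ × ℝ | p.1 = c} ∩ segment ℝ t.1 t.2).Nonempty then 1 else 0) + cnt c A) := by
    intro c
    rw [hMeq, cnt_insert c s _ hsIns, cnt_insert c t _ htA]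
  have hcntM' : ∀ c : ℝ, cnt c M' =
      (if ({p : ℝ × ℝ | p.1 = c} ∩ segment ℝ ((p₁, p₂) : (ℝ × ℝ) × (ℝ × ℝ)).1
        ((p₁, p₂) : (ℝ × ℝ) × (ℝ × ℝ)).2).Nonempty then 1 else 0) +
      ((if ({p : ℝ × ℝ | p.1 = c} ∩ segment ℝ ((p₃, p₄) : (ℝ × ℝ) × (ℝ × ℝ)).1
        ((p₃, p₄) : (ℝ × ℝ) × (ℝ × ℝ)).2).Nonempty then 1 else 0) + cnt c A) := by
    intro c
    rw [hM'eq, cnt_insert c _ _ huIns, cnt_insert c _ _ hvA]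
  have hPiff : ∀ c ∈ K,
      (({p : ℝ × ℝ | p.1 = c} ∩ segment ℝ ((p₁, p₂) : (ℝ × ℝ) × (ℝ × ℝ)).1
        ((p₁, p₂) : (ℝ × ℝ) × (ℝ × ℝ)).2).Nonempty ↔ p₁.1 < c ∧ c < p₂.1) := by
    intro c hc
    have := cross_iff p₁ p₂ c (hKavoid c hc p₁ hp1P) (hKavoid c hc p₂ hp2P)
    rw [min_eq_left h12.le, max_eq_right h12.le] at this
    exact this
  have hQiff : ∀ c ∈ K,
      (({p : ℝ × ℝ | p.1 = c} ∩ segment ℝ ((p₃, p₄) : (ℝ × ℝ) × (ℝ × ℝ)).1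
        ((p₃, p₄) : (ℝ × ℝ) × (ℝ × ℝ)).2).Nonempty ↔ p₃.1 < c ∧ c < p₄.1) := by
    intro c hc
    have := cross_iff p₃ p₄ c (hKavoid c hc p₃ hp3P) (hKavoid c hc p₄ hp4P)
    rw [min_eq_left h34.le, max_eq_right h34.le] at this
    exact this
  have hRiff : ∀ c ∈ K,
      (({p : ℝ × ℝ | p.1 = c} ∩ segment ℝ s.1 s.2).Nonempty ↔ a1 < c ∧ c < b1) := by
    intro c hc
    have := cross_iff s.1 s.2 c (hKavoid c hc s.1 hsP.1) (hKavoid c hc s.2 hsP.2.1)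
    rw [← ha1def, ← hb1def] at this
    exact this
  have hSiff : ∀ c ∈ K,
      (({p : ℝ × ℝ | p.1 = c} ∩ segment ℝ t.1 t.2).Nonempty ↔ a2 < c ∧ c < b2) := by
    intro c hc
    have := cross_iff t.1 t.2 c (hKavoid c hc t.1 htP.1) (hKavoid c hc t.2 htP.2.1)
    rw [← ha2def, ← hb2def] at this
    exact this
  have hle : ∀ c ∈ K, cnt c M' ≤ cnt c M := by
    intro c hc
    rw [hcntM c, hcntM' c]
    have hkey := ind_le p₁.1 p₂.1 p₃.1 p₄.1 a1 b1 a2 b2 c h23 c1 c2 c3 c4 c5 c6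
      (Ne.symm (hKavoid c hc p₂ hp2P)) (Ne.symm (hKavoid c hc p₃ hp3P))
      _ _ _ _ (hPiff c hc) (hQiff c hc) (hRiff c hc) (hSiff c hc)
    omega
  -- find a line strictly between p₂ and p₃
  obtain ⟨r, hrmem, hrmin⟩ := Finset.exists_min_image (P.filter fun r => p₂.1 < r.1) Prod.fst
    ⟨p₃, Finset.mem_filter.mpr ⟨hp3P, h23⟩⟩
  rw [Finset.mem_filter] at hrmem
  obtain ⟨c₀, hc₀K, hc₀1, hc₀2⟩ := hKsep p₂ hp2P r hrmem.1 hrmem.2 (fun w hw hcon =>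
    absurd (hrmin w (Finset.mem_filter.mpr ⟨hw, hcon.1⟩)) (not_le.mpr hcon.2))
  have hc₀3 : c₀ < p₃.1 :=
    lt_of_lt_of_le hc₀2 (hrmin p₃ (Finset.mem_filter.mpr ⟨hp3P, h23⟩))
  have hgap : cnt c₀ M' + 2 ≤ cnt c₀ M := by
    have hPu : ¬ ({p : ℝ × ℝ | p.1 = c₀} ∩ segment ℝ ((p₁, p₂) : (ℝ × ℝ) × (ℝ × ℝ)).1
        ((p₁, p₂) : (ℝ × ℝ) × (ℝ × ℝ)).2).Nonempty := by
      rw [hPiff c₀ hc₀K]; rintro ⟨-, h'⟩; linarith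
    have hQv : ¬ ({p : ℝ × ℝ | p.1 = c₀} ∩ segment ℝ ((p₃, p₄) : (ℝ × ℝ) × (ℝ × ℝ)).1
        ((p₃, p₄) : (ℝ × ℝ) × (ℝ × ℝ)).2).Nonempty := by
      rw [hQiff c₀ hc₀K]; rintro ⟨h', -⟩; linarith
    have hRs : ({p : ℝ × ℝ | p.1 = c₀} ∩ segment ℝ s.1 s.2).Nonempty :=
      (hRiff c₀ hc₀K).mpr ⟨by linarith, by linarith⟩
    have hSt : ({p : ℝ × ℝ | p.1 = c₀} ∩ segment ℝ t.1 t.2).Nonempty :=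
      (hSiff c₀ hc₀K).mpr ⟨by linarith, by linarith⟩
    rw [hcntM' c₀, hcntM c₀, if_neg hPu, if_neg hQv, if_pos hRs, if_pos hSt]
    omega
  rw [Phi_eq_sum_cnt, Phi_eq_sum_cnt]
  rw [← Finset.add_sum_erase K (fun c => cnt c M') hc₀K,
    ← Finset.add_sum_erase K (fun c => cnt c M) hc₀K]
  have hsum : ∑ c ∈ K.erase c₀, cnt c M' ≤ ∑ c ∈ K.erase c₀, cnt c M :=
    Finset.sum_le_sum fun c hcE => hle c (Finset.mem_of_mem_erase hcE)
  omega
end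

section
/- With the flip strategy that always replaces a crossing pair on x-sorted endpoints p1,p2,p3,p4 by the segments p1p2 and p3p4, any perfect straight-line matching on 2n points in general position with distinct x-coordinates reaches a non-crossing matching after at most n²/2 flips. -/
open Finset

section PairCount

variable {α : Type*} [DecidableEq α] (r : α → α → Prop) [DecidableRel r]

def pairCount (M : Finset α) : ℕ := ∑ u ∈ M, ∑ v ∈ M, if u ≠ v ∧ r u v then 1 else 0

theorem pairCount_le (M : Finset α) : pairCount r M ≤ #M * (#M - 1) := by
  have hrow : ∀ u ∈ M, ∑ v ∈ M, (if u ≠ v ∧ r u v then 1 else 0) ≤ #M - 1 := by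
    intro u hu
    rw [← add_sum_erase M _ hu, if_neg (fun h => h.1 rfl), zero_add, ← card_erase_of_mem hu]
    exact sum_le_card_nsmul _ _ 1 (fun v _ => by split_ifs <;> simp) |>.trans_eq (by simp)
  exact (sum_le_card_nsmul M _ _ hrow).trans_eq (by simp)

variable {r} [Std.Symm r]

theorem pairCount_insert {a : α} {S : Finset α} (ha : a ∉ S) :
    pairCount r (insert a S) =
      pairCount r S + 2 * ∑ v ∈ S, if a ≠ v ∧ r a v then 1 else 0 := by
  have hsymm : ∀ u, (if u ≠ a ∧ r u a then 1 else 0 : ℕ) = if a ≠ u ∧ r a u then 1 else 0 :=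
    fun u => if_congr ⟨fun h => ⟨h.1.symm, symm_of r h.2⟩, fun h => ⟨h.1.symm, symm_of r h.2⟩⟩
      rfl rfl
  simp only [pairCount, sum_insert ha, ne_eq, not_true_eq_false, false_and, if_false, zero_add,
    sum_add_distrib, hsymm]
  ring

theorem pairCount_exchange_add_two_le {M : Finset α} {s t s' t' : α}
    (hs : s ∈ M) (ht : t ∈ M) (hst : s ≠ t) (hs' : s' ∉ M \ {s, t}) (ht' : t' ∉ M \ {s, t})
    (hs't' : s' ≠ t') (hrst : r s t) (hrs't' : ¬ r s' t')
    (hle : ∀ u ∈ M \ {s, t}, (if r u s' then 1 else 0) + (if r u t' then 1 else 0) ≤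
      (if r u s then 1 else 0) + (if r u t then 1 else 0)) :
    pairCount r (M \ {s, t} ∪ {s', t'}) + 2 ≤ pairCount r M := by
  set R := M \ {s, t}
  have hM : M = insert s (insert t R) := by
    rw [insert_eq, insert_eq, ← union_assoc, ← insert_eq, union_sdiff_of_subset]
    simp [insert_subset_iff, hs, ht]
  have hM' : R ∪ {s', t'} = insert s' (insert t' R) := by
    ext
    simp only [mem_union, mem_insert, mem_singleton]
    tauto
  have hsR : s ∉ R := by simp [R]
  have htR : t ∉ R := by simp [R]
  have hrow : ∀ u ∈ R, ∀ w ∉ R, (if w ≠ u ∧ r w u then 1 else 0 : ℕ) = if r u w then 1 else 0 :=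
    fun u hu w hw => if_congr
      ⟨fun h => symm_of r h.2, fun h => ⟨by rintro rfl; exact hw hu, symm_of r h⟩⟩ rfl rfl
  have hsum : ∑ u ∈ R, ((if s' ≠ u ∧ r s' u then 1 else 0) + (if t' ≠ u ∧ r t' u then 1 else 0))
      ≤ ∑ u ∈ R, ((if s ≠ u ∧ r s u then 1 else 0) + (if t ≠ u ∧ r t u then 1 else 0)) :=
    sum_le_sum fun u hu => by
      rw [hrow u hu s' hs', hrow u hu t' ht', hrow u hu s hsR, hrow u hu t htR]
      exact hle u hu
  rw [hM', hM, pairCount_insert (by simp [hs't', hs']), pairCount_insert ht',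
    pairCount_insert (by simp [hst, hsR]), pairCount_insert htR]
  simp only [sum_insert ht', sum_insert htR, if_pos (show s ≠ t ∧ r s t from ⟨hst, hrst⟩),
    if_neg (show ¬(s' ≠ t' ∧ r s' t') from fun h => hrs't' h.2)]
  rw [sum_add_distrib, sum_add_distrib] at hsum
  omega

end PairCount

theorem ite_add_ite_le {p q p' q' : Prop} [Decidable p] [Decidable q] [Decidable p']
    [Decidable q'] (hor : p ∨ q → p' ∨ q') (hand : p ∧ q → p' ∧ q') :
    (if p then 1 else 0) + (if q then 1 else 0) ≤
      (if p' then 1 else 0) + (if q' then 1 else 0) := by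
  split_ifs <;> simp_all

theorem exists_chain_of_potential {β : Type*} (F : β → β → Prop) (I T : β → Prop) (φ : β → ℕ)
    (hstep : ∀ x, I x → ¬ T x → ∃ y, F x y ∧ I y ∧ φ y < φ x) (x : β) (hx : I x) :
    ∃ k ≤ φ x, ∃ f : ℕ → β, f 0 = x ∧ (∀ i < k, F (f i) (f (i + 1))) ∧ T (f k) := by
  induction hφ : φ x using Nat.strong_induction_on generalizing x with
  | _ m ih =>
    by_cases hT : T x
    · exact ⟨0, Nat.zero_le _, fun _ => x, rfl, fun i hi => absurd hi (Nat.not_lt_zero i), hT⟩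
    obtain ⟨y, hxy, hy, hlt⟩ := hstep x hx hT
    obtain ⟨k, hk, f, rfl, hf, hTk⟩ := ih _ (hφ ▸ hlt) y hy rfl
    refine ⟨k + 1, by omega, fun | 0 => x | i + 1 => f i, rfl, ?_, hTk⟩
    rintro (_ | i) hi
    · exact hxy
    · exact hf i (by omega)

local notation "Segment" => (ℝ × ℝ) × (ℝ × ℝ)

def XOverlap (u v : Segment) : Prop := (Set.uIcc u.1.1 u.2.1 ∩ Set.uIcc v.1.1 v.2.1).Nonempty

instance : Std.Symm XOverlap := ⟨fun u v h => by rwa [XOverlap, Set.inter_comm]⟩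

noncomputable instance : DecidableRel XOverlap := Classical.decRel _

theorem xOverlap_iff {u v : Segment} :
    XOverlap u v ↔ min v.1.1 v.2.1 ≤ max u.1.1 u.2.1 ∧ min u.1.1 u.2.1 ≤ max v.1.1 v.2.1 := by
  simp only [XOverlap, Set.uIcc, Set.Icc_inter_Icc, Set.nonempty_Icc, sup_le_iff, le_inf_iff,
    inf_le_sup, true_and, and_true]

theorem xOverlap_mk_iff {u : Segment} {p q : ℝ × ℝ} (h : p.1 ≤ q.1) :
    XOverlap u (p, q) ↔ p.1 ≤ max u.1.1 u.2.1 ∧ min u.1.1 u.2.1 ≤ q.1 := by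
  rw [xOverlap_iff, min_eq_left h, max_eq_right h]

theorem xOverlap_of_crossing {s t : Segment}
    (h : (openSegment ℝ s.1 s.2 ∩ openSegment ℝ t.1 t.2).Nonempty) : XOverlap s t := by
  obtain ⟨z, hzs, hzt⟩ := h
  have hfst : ∀ {p q : ℝ × ℝ}, z ∈ openSegment ℝ p q → z.1 ∈ Set.uIcc p.1 q.1 := fun hz =>
    segment_eq_uIcc (𝕜 := ℝ) _ _ ▸
      openSegment_subset_segment _ _ _ (Prod.openSegment_subset _ _ hz).1
  exact ⟨z.1, hfst hzs, hfst hzt⟩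

/-- The closed intervals `[a, b]`, `[c, d]` (left ends below right ends) are traded for
`[min a c, max a c]` and `[min b d, max b d]`: an interval `[j₁, j₂]` meeting one, resp. both,
of the new intervals meets one, resp. both, of the old ones. -/
theorem meets_of_meets_sorted {a b c d j₁ j₂ : ℝ} (h : max a c ≤ min b d) :
    ((min a c ≤ j₂ ∧ j₁ ≤ max a c) ∨ (min b d ≤ j₂ ∧ j₁ ≤ max b d) →
      (a ≤ j₂ ∧ j₁ ≤ b) ∨ (c ≤ j₂ ∧ j₁ ≤ d)) ∧
    ((min a c ≤ j₂ ∧ j₁ ≤ max a c) ∧ (min b d ≤ j₂ ∧ j₁ ≤ max b d) →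
      (a ≤ j₂ ∧ j₁ ≤ b) ∧ (c ≤ j₂ ∧ j₁ ≤ d)) := by
  simp only [max_le_iff, le_min_iff] at h
  simp only [min_le_iff, le_max_iff]
  constructor
  · rintro (⟨h | h, h' | h'⟩ | ⟨h | h, h' | h'⟩)
    all_goals first | (left; constructor <;> linarith) | (right; constructor <;> linarith)
  · rintro ⟨⟨h₁ | h₁, h₂ | h₂⟩, ⟨h₃ | h₃, h₄ | h₄⟩⟩ <;> refine ⟨⟨?_, ?_⟩, ?_, ?_⟩ <;> linarith

noncomputable def leftmost (p q : ℝ × ℝ) : ℝ × ℝ := if p.1 ≤ q.1 then p else q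

noncomputable def rightmost (p q : ℝ × ℝ) : ℝ × ℝ := if p.1 ≤ q.1 then q else p

theorem leftmost_fst (p q : ℝ × ℝ) : (leftmost p q).1 = min p.1 q.1 := by
  rw [leftmost, apply_ite Prod.fst, min_def]

theorem rightmost_fst (p q : ℝ × ℝ) : (rightmost p q).1 = max p.1 q.1 := by
  rw [rightmost, apply_ite Prod.fst, max_def]

theorem leftmost_eq_or (p q : ℝ × ℝ) : leftmost p q = p ∨ leftmost p q = q := by
  unfold leftmost; split_ifs <;> simp

theorem rightmost_eq_or (p q : ℝ × ℝ) : rightmost p q = p ∨ rightmost p q = q := by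
  unfold rightmost; split_ifs <;> simp

theorem eq_leftmost_or_eq_rightmost_iff {x p q : ℝ × ℝ} :
    x = leftmost p q ∨ x = rightmost p q ↔ x = p ∨ x = q := by
  unfold leftmost rightmost; split_ifs <;> tauto

theorem leftmost_rightmost_sort (p q p' q' : ℝ × ℝ) :
    ({leftmost (leftmost p q) (leftmost p' q'), rightmost (leftmost p q) (leftmost p' q'),
      leftmost (rightmost p q) (rightmost p' q'), rightmost (rightmost p q) (rightmost p' q')} :
      Set (ℝ × ℝ)) = {p, q, p', q'} := by
  ext x
  simp only [Set.mem_insert_iff, Set.mem_singleton_iff]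
  rw [← or_assoc, eq_leftmost_or_eq_rightmost_iff, eq_leftmost_or_eq_rightmost_iff]
  have := @eq_leftmost_or_eq_rightmost_iff x p q
  have := @eq_leftmost_or_eq_rightmost_iff x p' q'
  tauto

namespace IsSegMatching

variable {P : Finset (ℝ × ℝ)} {M : Finset Segment}

theorem mem (hM : IsSegMatching P M) {u : Segment} (hu : u ∈ M) {p : ℝ × ℝ}
    (hp : p = u.1 ∨ p = u.2) : p ∈ P := by
  rcases hp with rfl | rfl
  exacts [(hM.1 u hu).1, (hM.1 u hu).2.1]

theorem eq_of_endpoint (hM : IsSegMatching P M) {u v : Segment} (hu : u ∈ M) (hv : v ∈ M)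
    {p : ℝ × ℝ} (hpu : p = u.1 ∨ p = u.2) (hpv : p = v.1 ∨ p = v.2) : u = v :=
  (hM.2 p (hM.mem hu hpu)).unique ⟨hu, hpu⟩ ⟨hv, hpv⟩

theorem fst_ne_fst (hM : IsSegMatching P M) (hinj : Set.InjOn Prod.fst (P : Set (ℝ × ℝ)))
    {u : Segment} (hu : u ∈ M) : u.1.1 ≠ u.2.1 := fun h =>
  (hM.1 u hu).2.2 (hinj (hM.1 u hu).1 (hM.1 u hu).2.1 h)

theorem fst_ne_fst_of_ne (hM : IsSegMatching P M) (hinj : Set.InjOn Prod.fst (P : Set (ℝ × ℝ)))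
    {u v : Segment} (hu : u ∈ M) (hv : v ∈ M) (huv : u ≠ v) {p q : ℝ × ℝ}
    (hp : p = u.1 ∨ p = u.2) (hq : q = v.1 ∨ q = v.2) : p.1 ≠ q.1 := fun h =>
  huv (hM.eq_of_endpoint hu hv hp (hinj (hM.mem hv hq) (hM.mem hu hp) h.symm ▸ hq))

theorem card_eq (hM : IsSegMatching P M) : #P = 2 * #M := by
  have hP : P = M.biUnion fun u => {u.1, u.2} := by
    ext p
    simp only [mem_biUnion, mem_insert, mem_singleton]
    constructor
    · intro hp
      obtain ⟨u, hu, -⟩ := hM.2 p hp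
      exact ⟨u, hu⟩
    · rintro ⟨u, hu, hp⟩
      exact hM.mem hu hp
  rw [hP, card_biUnion, sum_const_nat fun u hu => card_pair (hM.1 u hu).2.2, mul_comm]
  intro u hu v hv huv
  simp only [Function.onFun, disjoint_left, mem_insert, mem_singleton]
  exact fun p hpu hpv => huv (hM.eq_of_endpoint hu hv hpu hpv)

theorem notMem_sdiff (hM : IsSegMatching P M) {s t n : Segment} (hs : s ∈ M) (ht : t ∈ M)
    {p : ℝ × ℝ} (hpn : p = n.1 ∨ p = n.2) (hp : (p = s.1 ∨ p = s.2) ∨ (p = t.1 ∨ p = t.2)) :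
    n ∉ M \ {s, t} := by
  intro hn
  simp only [mem_sdiff, mem_insert, mem_singleton, not_or] at hn
  rcases hp with hp | hp
  exacts [hn.2.1 (hM.eq_of_endpoint hn.1 hs hpn hp), hn.2.2 (hM.eq_of_endpoint hn.1 ht hpn hp)]

theorem exchange (hM : IsSegMatching P M) {s t n₁ n₂ : Segment} (hs : s ∈ M) (ht : t ∈ M)
    (hends : ({n₁.1, n₁.2, n₂.1, n₂.2} : Set (ℝ × ℝ)) = {s.1, s.2, t.1, t.2})
    (hn₁ : n₁.1 ≠ n₁.2) (hn₂ : n₂.1 ≠ n₂.2)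
    (hdisj : ∀ p, (p = n₁.1 ∨ p = n₁.2) → ¬(p = n₂.1 ∨ p = n₂.2)) :
    IsSegMatching P (M \ {s, t} ∪ {n₁, n₂}) := by
  have hcov : ∀ p, ((p = n₁.1 ∨ p = n₁.2) ∨ (p = n₂.1 ∨ p = n₂.2)) ↔
      ((p = s.1 ∨ p = s.2) ∨ (p = t.1 ∨ p = t.2)) := by
    intro p
    simpa only [Set.mem_insert_iff, Set.mem_singleton_iff, or_assoc] using Set.ext_iff.1 hends p
  have hmem : ∀ u, u ∈ M \ {s, t} ∪ {n₁, n₂} ↔ u ∈ M \ {s, t} ∨ u = n₁ ∨ u = n₂ := fun u => by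
    simp only [mem_union, mem_insert, mem_singleton]
  have hnP : ∀ p, (p = n₁.1 ∨ p = n₁.2) ∨ (p = n₂.1 ∨ p = n₂.2) → p ∈ P := fun p h =>
    ((hcov p).1 h).elim (hM.mem hs) (hM.mem ht)
  have hsub : ∀ u ∈ M \ {s, t}, u ∈ M := fun u hu => (mem_sdiff.1 hu).1
  refine ⟨fun u hu => ?_, fun p hp => ?_⟩
  · rcases (hmem u).1 hu with hu | rfl | rfl
    · exact hM.1 u (hsub u hu)
    · exact ⟨hnP _ (Or.inl (Or.inl rfl)), hnP _ (Or.inl (Or.inr rfl)), hn₁⟩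
    · exact ⟨hnP _ (Or.inr (Or.inl rfl)), hnP _ (Or.inr (Or.inr rfl)), hn₂⟩
  by_cases hE : (p = s.1 ∨ p = s.2) ∨ (p = t.1 ∨ p = t.2)
  · have hfree : ∀ v ∈ M \ {s, t}, ¬(p = v.1 ∨ p = v.2) := fun v hv hpv =>
      hM.notMem_sdiff hs ht hpv hE hv
    rcases (hcov p).2 hE with h₁ | h₂
    · refine ⟨n₁, ⟨(hmem _).2 (by simp), h₁⟩, fun v ⟨hv, hpv⟩ => ?_⟩
      rcases (hmem v).1 hv with hv | rfl | rfl
      exacts [absurd hpv (hfree v hv), rfl, absurd hpv (hdisj p h₁)]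
    · refine ⟨n₂, ⟨(hmem _).2 (by simp), h₂⟩, fun v ⟨hv, hpv⟩ => ?_⟩
      rcases (hmem v).1 hv with hv | rfl | rfl
      exacts [absurd hpv (hfree v hv), absurd h₂ (hdisj p hpv), rfl]
  · obtain ⟨u, ⟨hu, hpu⟩, huniq⟩ := hM.2 p hp
    have huR : u ∈ M \ {s, t} := by
      simp only [mem_sdiff, mem_insert, mem_singleton, not_or]
      refine ⟨hu, ?_, ?_⟩ <;> rintro rfl <;> tauto
    refine ⟨u, ⟨(hmem _).2 (Or.inl huR), hpu⟩, fun v ⟨hv, hpv⟩ => ?_⟩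
    rcases (hmem v).1 hv with hv | rfl | rfl
    · exact huniq v ⟨hsub v hv, hpv⟩
    all_goals exact absurd ((hcov p).1 (by tauto)) hE

end IsSegMatching

theorem IsSegMatching.abscissae_of_crossing {P : Finset (ℝ × ℝ)} {M : Finset Segment}
    (hM : IsSegMatching P M) (hinj : Set.InjOn Prod.fst (P : Set (ℝ × ℝ)))
    {s t : Segment} (hs : s ∈ M) (ht : t ∈ M) (hst : s ≠ t)
    (hcross : (openSegment ℝ s.1 s.2 ∩ openSegment ℝ t.1 t.2).Nonempty) :
    max (min s.1.1 s.2.1) (min t.1.1 t.2.1) < min (max s.1.1 s.2.1) (max t.1.1 t.2.1) ∧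
      min s.1.1 s.2.1 ≠ min t.1.1 t.2.1 ∧ max s.1.1 s.2.1 ≠ max t.1.1 t.2.1 := by
  have hov := xOverlap_iff.1 (xOverlap_of_crossing hcross)
  have hfst : ∀ {p q : ℝ × ℝ}, (p = s.1 ∨ p = s.2) → (q = t.1 ∨ q = t.2) → p.1 ≠ q.1 :=
    hM.fst_ne_fst_of_ne hinj hs ht hst
  have hsd : min s.1.1 s.2.1 < max t.1.1 t.2.1 := hov.2.lt_of_ne <| by
    simpa only [leftmost_fst, rightmost_fst] using
      hfst (leftmost_eq_or _ _) (rightmost_eq_or _ _)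
  have htd : min t.1.1 t.2.1 < max s.1.1 s.2.1 := hov.1.lt_of_ne <| by
    simpa only [leftmost_fst, rightmost_fst] using
      (hfst (rightmost_eq_or _ _) (leftmost_eq_or _ _)).symm
  refine ⟨max_lt (lt_min (min_lt_max.2 (hM.fst_ne_fst hinj hs)) hsd)
    (lt_min htd (min_lt_max.2 (hM.fst_ne_fst hinj ht))), ?_, ?_⟩
  · simpa only [leftmost_fst] using hfst (leftmost_eq_or _ _) (leftmost_eq_or _ _)
  · simpa only [rightmost_fst] using hfst (rightmost_eq_or _ _) (rightmost_eq_or _ _)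

theorem IsSegMatching.exists_xSortedFlip {P : Finset (ℝ × ℝ)} {M : Finset Segment}
    (hM : IsSegMatching P M) (hinj : Set.InjOn Prod.fst (P : Set (ℝ × ℝ)))
    {s t : Segment} (hs : s ∈ M) (ht : t ∈ M) (hst : s ≠ t)
    (hcross : (openSegment ℝ s.1 s.2 ∩ openSegment ℝ t.1 t.2).Nonempty) :
    ∃ M', IsXSortedFlip M M' ∧ IsSegMatching P M' ∧
      pairCount XOverlap M' + 2 ≤ pairCount XOverlap M := by
  obtain ⟨hlr, hac, hbd⟩ := hM.abscissae_of_crossing hinj hs ht hst hcross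
  set a := min s.1.1 s.2.1
  set b := max s.1.1 s.2.1
  set c := min t.1.1 t.2.1
  set d := max t.1.1 t.2.1
  -- By `hlr`, sorting the two left ends and the two right ends separately sorts all four points.
  set p₁ := leftmost (leftmost s.1 s.2) (leftmost t.1 t.2)
  set p₂ := rightmost (leftmost s.1 s.2) (leftmost t.1 t.2)
  set p₃ := leftmost (rightmost s.1 s.2) (rightmost t.1 t.2)
  set p₄ := rightmost (rightmost s.1 s.2) (rightmost t.1 t.2)
  have hx₁ : p₁.1 = min a c := by simp only [p₁, leftmost_fst]; rfl
  have hx₂ : p₂.1 = max a c := by simp only [p₂, leftmost_fst, rightmost_fst]; rfl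
  have hx₃ : p₃.1 = min b d := by simp only [p₃, leftmost_fst, rightmost_fst]; rfl
  have hx₄ : p₄.1 = max b d := by simp only [p₄, rightmost_fst]; rfl
  have h₁₂ : p₁.1 < p₂.1 := hx₁ ▸ hx₂ ▸ min_lt_max.2 hac
  have h₂₃ : p₂.1 < p₃.1 := hx₂ ▸ hx₃ ▸ hlr
  have h₃₄ : p₃.1 < p₄.1 := hx₃ ▸ hx₄ ▸ min_lt_max.2 hbd
  have hends : ({p₁, p₂, p₃, p₄} : Set (ℝ × ℝ)) = {s.1, s.2, t.1, t.2} :=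
    leftmost_rightmost_sort s.1 s.2 t.1 t.2
  have hcov : ∀ p, p = p₁ ∨ p = p₂ ∨ p = p₃ ∨ p = p₄ →
      (p = s.1 ∨ p = s.2) ∨ (p = t.1 ∨ p = t.2) := fun p hp => by
    have := hends ▸ (show p ∈ ({p₁, p₂, p₃, p₄} : Set (ℝ × ℝ)) from hp)
    simpa only [Set.mem_insert_iff, Set.mem_singleton_iff, or_assoc] using this
  have hdisj : ∀ p, (p = p₁ ∨ p = p₂) → ¬(p = p₃ ∨ p = p₄) := by
    rintro p (rfl | rfl) (h | h) <;> have := congrArg Prod.fst h <;> linarith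
  refine ⟨_, ⟨p₁, p₂, p₃, p₄, s, t, hs, ht, hst, h₁₂, h₂₃, h₃₄, hends.symm, hcross, rfl⟩,
    hM.exchange hs ht hends (fun h => h₁₂.ne (congrArg _ h)) (fun h => h₃₄.ne (congrArg _ h))
      hdisj, ?_⟩
  refine pairCount_exchange_add_two_le hs ht hst
    (hM.notMem_sdiff hs ht (Or.inl rfl) (hcov _ (Or.inl rfl)))
    (hM.notMem_sdiff hs ht (Or.inl rfl) (hcov _ (Or.inr (Or.inr (Or.inl rfl)))))
    (fun h => hdisj p₁ (Or.inl rfl) (Or.inl (congrArg Prod.fst h)))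
    (xOverlap_of_crossing hcross) ?_ fun u _ => ?_
  · rw [xOverlap_mk_iff h₃₄.le, max_eq_right h₁₂.le]
    exact fun h => h₂₃.not_ge h.1
  · have hsorted := meets_of_meets_sorted (j₁ := min u.1.1 u.2.1) (j₂ := max u.1.1 u.2.1) hlr.le
    apply ite_add_ite_le <;>
      rw [xOverlap_mk_iff h₁₂.le, xOverlap_mk_iff h₃₄.le, xOverlap_iff, xOverlap_iff, hx₁, hx₂,
        hx₃, hx₄]
    exacts [hsorted.1, hsorted.2]

def IsNoncrossing (M : Finset Segment) : Prop :=
  ∀ s ∈ M, ∀ t ∈ M, s ≠ t → Disjoint (openSegment ℝ s.1 s.2) (openSegment ℝ t.1 t.2)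

theorem IsSegMatching.exists_xSortedFlip_of_not_isNoncrossing {P : Finset (ℝ × ℝ)}
    {M : Finset Segment} (hM : IsSegMatching P M) (hinj : Set.InjOn Prod.fst (P : Set (ℝ × ℝ)))
    (hM' : ¬ IsNoncrossing M) :
    ∃ M', IsXSortedFlip M M' ∧ IsSegMatching P M' ∧
      pairCount XOverlap M' / 2 < pairCount XOverlap M / 2 := by
  simp only [IsNoncrossing, not_forall, Set.not_disjoint_iff_nonempty_inter] at hM'
  obtain ⟨s, hs, t, ht, hst, hcross⟩ := hM'
  obtain ⟨M', hflip, hM', hlt⟩ := hM.exists_xSortedFlip hinj hs ht hst hcross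
  exact ⟨M', hflip, hM', by omega⟩

theorem xsorted_flips_reach_noncrossing_general (n : ℕ) (P : Finset (ℝ × ℝ))
    (hcard : P.card = 2 * n)
    (hinj : Set.InjOn Prod.fst (↑P : Set (ℝ × ℝ)))
    (M : Finset ((ℝ × ℝ) × (ℝ × ℝ))) (hM : IsSegMatching P M) :
    ∃ k ≤ n ^ 2 / 2, ∃ f : ℕ → Finset ((ℝ × ℝ) × (ℝ × ℝ)),
      f 0 = M ∧
      (∀ i < k, IsXSortedFlip (f i) (f (i + 1))) ∧
      (∀ s ∈ f k, ∀ t ∈ f k, s ≠ t →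
        Disjoint (openSegment ℝ s.1 s.2) (openSegment ℝ t.1 t.2)) := by
  obtain ⟨k, hk, hchain⟩ := exists_chain_of_potential IsXSortedFlip (IsSegMatching P) IsNoncrossing
    (fun M => pairCount XOverlap M / 2)
    (fun _ hM hM' => hM.exists_xSortedFlip_of_not_isNoncrossing hinj hM') M hM
  have hMn : #M = n := by
    have := hM.card_eq
    omega
  refine ⟨k, hk.trans ?_, hchain⟩
  calc pairCount XOverlap M / 2 ≤ n * (n - 1) / 2 := Nat.div_le_div_right (hMn ▸ pairCount_le _ M)
    _ ≤ n ^ 2 / 2 := Nat.div_le_div_right (by rw [sq]; exact Nat.mul_le_mul_left _ (Nat.sub_le _ _))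

/-- With the strategy that always replaces a crossing pair on `x`-sorted
endpoints `p₁, p₂, p₃, p₄` by the segments `p₁p₂` and `p₃p₄`, any perfect
straight-line matching on `2n` points in general position with distinct
`x`-coordinates reaches a non-crossing matching after at most `n²/2` flips. -/
theorem xsorted_flips_reach_noncrossing (n : ℕ) (P : Finset (ℝ × ℝ))
    (hcard : P.card = 2 * n)
    (hinj : Set.InjOn Prod.fst (↑P : Set (ℝ × ℝ)))
    (hgp : ∀ p ∈ P, ∀ q ∈ P, ∀ r ∈ P, p ≠ q → p ≠ r → q ≠ r →
      ¬ Collinear ℝ ({p, q, r} : Set (ℝ × ℝ)))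
    (M : Finset ((ℝ × ℝ) × (ℝ × ℝ))) (hM : IsSegMatching P M) :
    ∃ k ≤ n ^ 2 / 2, ∃ f : ℕ → Finset ((ℝ × ℝ) × (ℝ × ℝ)),
      f 0 = M ∧
      (∀ i < k, IsXSortedFlip (f i) (f (i + 1))) ∧
      (∀ s ∈ f k, ∀ t ∈ f k, s ≠ t →
        Disjoint (openSegment ℝ s.1 s.2) (openSegment ℝ t.1 t.2)) :=
  xsorted_flips_reach_noncrossing_general n P hcard hinj M hM
end
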